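/- arXiv:2507.18418 — 12 statements merged into one kernel-verified Lean document; each statement's English description precedes it below -/
import Mathlib

section
/- Given monads S, T, U on a category C and a distributing retraction (r, s) of ST onto U, the natural transformation i := r ∘ Sη^T is a monad morphism from S to U, i.e., i ∘ η^S = η^U and i ∘ μ^S = μ^U ∘ (i * i) where * denotes horizontal composition. -/
open CategoryTheory

universe v u

/-- A distributing retraction of `ST` onto `U` (Definition 2.2 of the paper),
stated componentwise.  Here `ST` is the composite functor `X ↦ S (T X)`,
`i := r ∘ S η^T` and `j := r ∘ η^S T`. -/
theorem distributing_retraction_i_monad_morphism {C : Type u} [Category.{v} C] (S T U : Monad C)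
    (r : T.toFunctor ⋙ S.toFunctor ⟶ U.toFunctor)
    (s : U.toFunctor ⟶ T.toFunctor ⋙ S.toFunctor)
    -- `r ∘ s = id_U`
    (hretr : ∀ X : C, s.app X ≫ r.app X = 𝟙 (U.toFunctor.obj X))
    -- (1) `r ∘ η^S η^T = η^U`
    (ax1 : ∀ X : C, T.η.app X ≫ S.η.app (T.toFunctor.obj X) ≫ r.app X = U.η.app X)
    -- (2) `r ∘ μ^S T = μ^U ∘ (i * r)`
    (ax2 : ∀ X : C, S.μ.app (T.toFunctor.obj X) ≫ r.app X =
      S.toFunctor.map (r.app X) ≫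
        (S.toFunctor.map (T.η.app (U.toFunctor.obj X)) ≫ r.app (U.toFunctor.obj X)) ≫
        U.μ.app X)
    -- (3) `r ∘ S μ^T = μ^U ∘ (r * j)`
    (ax3 : ∀ X : C, S.toFunctor.map (T.μ.app X) ≫ r.app X =
      r.app (T.toFunctor.obj X) ≫
        U.toFunctor.map (S.η.app (T.toFunctor.obj X) ≫ r.app X) ≫ U.μ.app X)
    -- (4) `e ∘ η^S T = η^S T` where `e := s ∘ r`
    (ax4 : ∀ X : C, S.η.app (T.toFunctor.obj X) ≫ r.app X ≫ s.app X =
      S.η.app (T.toFunctor.obj X))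
    -- (5) `e ∘ S μ^T = S μ^T ∘ e T`
    (ax5 : ∀ X : C, S.toFunctor.map (T.μ.app X) ≫ r.app X ≫ s.app X =
      (r.app (T.toFunctor.obj X) ≫ s.app (T.toFunctor.obj X)) ≫
        S.toFunctor.map (T.μ.app X))
    -- (6) `e ∘ (s ∘ μ^U ∘ j U)^{#S} = (s ∘ μ^U ∘ j U)^{#S} ∘ e U`
    (ax6 : ∀ X : C,
      S.toFunctor.map
          ((S.η.app (T.toFunctor.obj (U.toFunctor.obj X)) ≫ r.app (U.toFunctor.obj X)) ≫
            U.μ.app X ≫ s.app X) ≫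
        S.μ.app (T.toFunctor.obj X) ≫ r.app X ≫ s.app X =
      (r.app (U.toFunctor.obj X) ≫ s.app (U.toFunctor.obj X)) ≫
        S.toFunctor.map
          ((S.η.app (T.toFunctor.obj (U.toFunctor.obj X)) ≫ r.app (U.toFunctor.obj X)) ≫
            U.μ.app X ≫ s.app X) ≫
        S.μ.app (T.toFunctor.obj X)) :
    -- `i ∘ η^S = η^U`
    (∀ X : C, S.η.app X ≫ (S.toFunctor.map (T.η.app X) ≫ r.app X) = U.η.app X) ∧
    -- `i ∘ μ^S = μ^U ∘ (i * i)`
    (∀ X : C, S.μ.app X ≫ (S.toFunctor.map (T.η.app X) ≫ r.app X) =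
      S.toFunctor.map (S.toFunctor.map (T.η.app X) ≫ r.app X) ≫
        (S.toFunctor.map (T.η.app (U.toFunctor.obj X)) ≫ r.app (U.toFunctor.obj X)) ≫
        U.μ.app X) := by
  constructor
  · intro X
    have h : S.η.app X ≫ S.toFunctor.map (T.η.app X) =
        T.η.app X ≫ S.η.app (T.toFunctor.obj X) := by
      simpa using (S.η.naturality (T.η.app X)).symm
    rw [← Category.assoc, h, Category.assoc, ax1 X]
  · intro X
    have hnat : S.μ.app X ≫ S.toFunctor.map (T.η.app X) =
        S.toFunctor.map (S.toFunctor.map (T.η.app X)) ≫ S.μ.app (T.toFunctor.obj X) := by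
      simpa using (S.μ.naturality (T.η.app X)).symm
    rw [← Category.assoc, hnat, Category.assoc, ax2 X, ← Category.assoc,
      ← S.toFunctor.map_comp]
end

section
/- Given monads S, T, U on a category C and a distributing retraction (r, s) of ST onto U, the natural transformation j := r ∘ η^S T is a monad morphism from T to U, i.e., j ∘ η^T = η^U and j ∘ μ^T = μ^U ∘ (j * j). -/
open CategoryTheory

universe v u

/-- A distributing retraction of `ST` onto `U` (Definition 2.2 of the paper),
stated componentwise.  Here `ST` is the composite functor `X ↦ S (T X)`,
`i := r ∘ S η^T` and `j := r ∘ η^S T`. -/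
theorem distributing_retraction_j_monad_morphism {C : Type u} [Category.{v} C] (S T U : Monad C)
    (r : T.toFunctor ⋙ S.toFunctor ⟶ U.toFunctor)
    (s : U.toFunctor ⟶ T.toFunctor ⋙ S.toFunctor)
    -- `r ∘ s = id_U`
    (hretr : ∀ X : C, s.app X ≫ r.app X = 𝟙 (U.toFunctor.obj X))
    -- (1) `r ∘ η^S η^T = η^U`
    (ax1 : ∀ X : C, T.η.app X ≫ S.η.app (T.toFunctor.obj X) ≫ r.app X = U.η.app X)
    -- (2) `r ∘ μ^S T = μ^U ∘ (i * r)`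
    (ax2 : ∀ X : C, S.μ.app (T.toFunctor.obj X) ≫ r.app X =
      S.toFunctor.map (r.app X) ≫
        (S.toFunctor.map (T.η.app (U.toFunctor.obj X)) ≫ r.app (U.toFunctor.obj X)) ≫
        U.μ.app X)
    -- (3) `r ∘ S μ^T = μ^U ∘ (r * j)`
    (ax3 : ∀ X : C, S.toFunctor.map (T.μ.app X) ≫ r.app X =
      r.app (T.toFunctor.obj X) ≫
        U.toFunctor.map (S.η.app (T.toFunctor.obj X) ≫ r.app X) ≫ U.μ.app X)
    -- (4) `e ∘ η^S T = η^S T` where `e := s ∘ r`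
    (ax4 : ∀ X : C, S.η.app (T.toFunctor.obj X) ≫ r.app X ≫ s.app X =
      S.η.app (T.toFunctor.obj X))
    -- (5) `e ∘ S μ^T = S μ^T ∘ e T`
    (ax5 : ∀ X : C, S.toFunctor.map (T.μ.app X) ≫ r.app X ≫ s.app X =
      (r.app (T.toFunctor.obj X) ≫ s.app (T.toFunctor.obj X)) ≫
        S.toFunctor.map (T.μ.app X))
    -- (6) `e ∘ (s ∘ μ^U ∘ j U)^{#S} = (s ∘ μ^U ∘ j U)^{#S} ∘ e U`
    (ax6 : ∀ X : C,
      S.toFunctor.map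
          ((S.η.app (T.toFunctor.obj (U.toFunctor.obj X)) ≫ r.app (U.toFunctor.obj X)) ≫
            U.μ.app X ≫ s.app X) ≫
        S.μ.app (T.toFunctor.obj X) ≫ r.app X ≫ s.app X =
      (r.app (U.toFunctor.obj X) ≫ s.app (U.toFunctor.obj X)) ≫
        S.toFunctor.map
          ((S.η.app (T.toFunctor.obj (U.toFunctor.obj X)) ≫ r.app (U.toFunctor.obj X)) ≫
            U.μ.app X ≫ s.app X) ≫
        S.μ.app (T.toFunctor.obj X)) :
    -- `j ∘ η^T = η^U`
    (∀ X : C, T.η.app X ≫ (S.η.app (T.toFunctor.obj X) ≫ r.app X) = U.η.app X) ∧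
    -- `j ∘ μ^T = μ^U ∘ (j * j)`
    (∀ X : C, T.μ.app X ≫ (S.η.app (T.toFunctor.obj X) ≫ r.app X) =
      T.toFunctor.map (S.η.app (T.toFunctor.obj X) ≫ r.app X) ≫
        (S.η.app (T.toFunctor.obj (U.toFunctor.obj X)) ≫ r.app (U.toFunctor.obj X)) ≫
        U.μ.app X) := by
  constructor
  · intro X
    rw [ax1]
  · intro X
    have hnat : T.μ.app X ≫ S.η.app (T.toFunctor.obj X) =
        S.η.app (T.toFunctor.obj (T.toFunctor.obj X)) ≫ S.toFunctor.map (T.μ.app X) :=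
      by simpa using S.η.naturality (T.μ.app X)
    have hnat2 : T.toFunctor.map (S.η.app (T.toFunctor.obj X) ≫ r.app X) ≫
        S.η.app (T.toFunctor.obj (U.toFunctor.obj X)) =
        S.η.app (T.toFunctor.obj (T.toFunctor.obj X)) ≫
          S.toFunctor.map (T.toFunctor.map (S.η.app (T.toFunctor.obj X) ≫ r.app X)) :=
      by simpa using S.η.naturality (T.toFunctor.map (S.η.app (T.toFunctor.obj X) ≫ r.app X))
    have hnatr : S.toFunctor.map (T.toFunctor.map (S.η.app (T.toFunctor.obj X) ≫ r.app X)) ≫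
        r.app (U.toFunctor.obj X) =
        r.app (T.toFunctor.obj X) ≫ U.toFunctor.map (S.η.app (T.toFunctor.obj X) ≫ r.app X) :=
      r.naturality (S.η.app (T.toFunctor.obj X) ≫ r.app X)
    calc T.μ.app X ≫ S.η.app (T.toFunctor.obj X) ≫ r.app X
        = S.η.app (T.toFunctor.obj (T.toFunctor.obj X)) ≫
            S.toFunctor.map (T.μ.app X) ≫ r.app X := by
          rw [← Category.assoc, hnat, Category.assoc]
      _ = S.η.app (T.toFunctor.obj (T.toFunctor.obj X)) ≫
            r.app (T.toFunctor.obj X) ≫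
            U.toFunctor.map (S.η.app (T.toFunctor.obj X) ≫ r.app X) ≫ U.μ.app X := by
          rw [ax3]
      _ = T.toFunctor.map (S.η.app (T.toFunctor.obj X) ≫ r.app X) ≫
            (S.η.app (T.toFunctor.obj (U.toFunctor.obj X)) ≫ r.app (U.toFunctor.obj X)) ≫
            U.μ.app X := by
          have h2 := reassoc_of% hnat2
          have hr := reassoc_of% hnatr
          simp only [Category.assoc]
          rw [h2, hr]
end

section
/- Given monads S, T, U on a category C and a distributing retraction (r, s) of ST onto U, the natural transformation λ := s ∘ μ^U ∘ (j * i) : TS ⟹ ST, where i := r ∘ S η^T and j := r ∘ η^S T, satisfies the unit law λ ∘ (T * η^S) = η^S * T of a weak distributive law of S over T. -/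
open CategoryTheory

universe v u

/-- The candidate weak distributive law `λ := s ∘ μ^U ∘ (j * i) : TS ⟶ ST`,
componentwise, where `i := r ∘ S η^T` and `j := r ∘ η^S T`. -/
def lamOf {C : Type u} [Category.{v} C] (S T U : Monad C)
    (r : T.toFunctor ⋙ S.toFunctor ⟶ U.toFunctor)
    (s : U.toFunctor ⟶ T.toFunctor ⋙ S.toFunctor) (X : C) :
    T.toFunctor.obj (S.toFunctor.obj X) ⟶ S.toFunctor.obj (T.toFunctor.obj X) :=
  T.toFunctor.map (S.toFunctor.map (T.η.app X) ≫ r.app X) ≫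
    (S.η.app (T.toFunctor.obj (U.toFunctor.obj X)) ≫ r.app (U.toFunctor.obj X)) ≫
    U.μ.app X ≫ s.app X

/-- A distributing retraction of `ST` onto `U` (Definition 2.2 of the paper),
stated componentwise.  Here `ST` is the composite functor `X ↦ S (T X)`,
`i := r ∘ S η^T` and `j := r ∘ η^S T`. -/
theorem distributing_retraction_lambda_unit_law {C : Type u} [Category.{v} C] (S T U : Monad C)
    (r : T.toFunctor ⋙ S.toFunctor ⟶ U.toFunctor)
    (s : U.toFunctor ⟶ T.toFunctor ⋙ S.toFunctor)
    -- `r ∘ s = id_U`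
    (hretr : ∀ X : C, s.app X ≫ r.app X = 𝟙 (U.toFunctor.obj X))
    -- (1) `r ∘ η^S η^T = η^U`
    (ax1 : ∀ X : C, T.η.app X ≫ S.η.app (T.toFunctor.obj X) ≫ r.app X = U.η.app X)
    -- (2) `r ∘ μ^S T = μ^U ∘ (i * r)`
    (ax2 : ∀ X : C, S.μ.app (T.toFunctor.obj X) ≫ r.app X =
      S.toFunctor.map (r.app X) ≫
        (S.toFunctor.map (T.η.app (U.toFunctor.obj X)) ≫ r.app (U.toFunctor.obj X)) ≫
        U.μ.app X)
    -- (3) `r ∘ S μ^T = μ^U ∘ (r * j)`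
    (ax3 : ∀ X : C, S.toFunctor.map (T.μ.app X) ≫ r.app X =
      r.app (T.toFunctor.obj X) ≫
        U.toFunctor.map (S.η.app (T.toFunctor.obj X) ≫ r.app X) ≫ U.μ.app X)
    -- (4) `e ∘ η^S T = η^S T` where `e := s ∘ r`
    (ax4 : ∀ X : C, S.η.app (T.toFunctor.obj X) ≫ r.app X ≫ s.app X =
      S.η.app (T.toFunctor.obj X))
    -- (5) `e ∘ S μ^T = S μ^T ∘ e T`
    (ax5 : ∀ X : C, S.toFunctor.map (T.μ.app X) ≫ r.app X ≫ s.app X =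
      (r.app (T.toFunctor.obj X) ≫ s.app (T.toFunctor.obj X)) ≫
        S.toFunctor.map (T.μ.app X))
    -- (6) `e ∘ (s ∘ μ^U ∘ j U)^{#S} = (s ∘ μ^U ∘ j U)^{#S} ∘ e U`
    (ax6 : ∀ X : C,
      S.toFunctor.map
          ((S.η.app (T.toFunctor.obj (U.toFunctor.obj X)) ≫ r.app (U.toFunctor.obj X)) ≫
            U.μ.app X ≫ s.app X) ≫
        S.μ.app (T.toFunctor.obj X) ≫ r.app X ≫ s.app X =
      (r.app (U.toFunctor.obj X) ≫ s.app (U.toFunctor.obj X)) ≫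
        S.toFunctor.map
          ((S.η.app (T.toFunctor.obj (U.toFunctor.obj X)) ≫ r.app (U.toFunctor.obj X)) ≫
            U.μ.app X ≫ s.app X) ≫
        S.μ.app (T.toFunctor.obj X)) :
    -- `λ ∘ T η^S = η^S T`
    ∀ X : C, T.toFunctor.map (S.η.app X) ≫ lamOf S T U r s X =
      S.η.app (T.toFunctor.obj X) := by
  intro X
  unfold lamOf
  have n1 : S.η.app X ≫ S.toFunctor.map (T.η.app X) = T.η.app X ≫ S.η.app (T.toFunctor.obj X) :=
    (S.η.naturality (T.η.app X)).symm
  have n2 : T.toFunctor.map (U.η.app X) ≫ S.η.app (T.toFunctor.obj (U.toFunctor.obj X)) =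
      S.η.app (T.toFunctor.obj X) ≫ S.toFunctor.map (T.toFunctor.map (U.η.app X)) :=
    S.η.naturality _
  have n3 : S.toFunctor.map (T.toFunctor.map (U.η.app X)) ≫ r.app (U.toFunctor.obj X) =
      r.app X ≫ U.toFunctor.map (U.η.app X) := r.naturality (U.η.app X)
  rw [← Functor.map_comp_assoc, ← Category.assoc (S.η.app X), n1, Category.assoc, ax1]
  slice_lhs 1 2 => rw [n2]
  slice_lhs 2 3 => rw [n3]
  slice_lhs 3 4 => rw [U.right_unit]
  simpa using ax4 X
end

section
/- Given monads S, T, U on a category C and a distributing retraction (r, s) of ST onto U, the natural transformation λ := s ∘ μ^U ∘ (j * i) is a weak distributive law of S over T, i.e., it satisfies λ ∘ Tη^S = η^S T, λ ∘ Tμ^S = μ^S T ∘ Sλ ∘ λS, and λ ∘ μ^T S = Sμ^T ∘ λT ∘ Tλ. -/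
open CategoryTheory

universe v u

namespace DRAux

variable {C : Type u} [Category.{v} C] (S T U : Monad C)
    (r : T.toFunctor ⋙ S.toFunctor ⟶ U.toFunctor)
    (s : U.toFunctor ⟶ T.toFunctor ⋙ S.toFunctor)

/-- `i := r ∘ S η^T`. -/
def iOf (X : C) : S.toFunctor.obj X ⟶ U.toFunctor.obj X :=
  S.toFunctor.map (T.η.app X) ≫ r.app X

/-- `j := r ∘ η^S T`. -/
def jOf (X : C) : T.toFunctor.obj X ⟶ U.toFunctor.obj X :=
  S.η.app (T.toFunctor.obj X) ≫ r.app X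

/-- `φ := s ∘ μ^U ∘ j U`. -/
def phiOf (X : C) :
    T.toFunctor.obj (U.toFunctor.obj X) ⟶ S.toFunctor.obj (T.toFunctor.obj X) :=
  jOf S T U r (U.toFunctor.obj X) ≫ U.μ.app X ≫ s.app X

lemma lamOf_eq (X : C) :
    lamOf S T U r s X = T.toFunctor.map (iOf S T U r X) ≫ phiOf S T U r s X := rfl

lemma r_nat {A B : C} (f : A ⟶ B) :
    S.toFunctor.map (T.toFunctor.map f) ≫ r.app B = r.app A ≫ U.toFunctor.map f :=
  r.naturality f

lemma s_nat {A B : C} (f : A ⟶ B) :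
    s.app A ≫ S.toFunctor.map (T.toFunctor.map f) = U.toFunctor.map f ≫ s.app B :=
  (s.naturality f).symm

lemma i_nat {A B : C} (f : A ⟶ B) :
    S.toFunctor.map f ≫ iOf S T U r B = iOf S T U r A ≫ U.toFunctor.map f := by
  have h : f ≫ T.η.app B = T.η.app A ≫ T.toFunctor.map f := by simpa using T.η.naturality f
  simp only [iOf]
  rw [← Category.assoc, ← Functor.map_comp, h, Functor.map_comp, Category.assoc,
    r_nat, Category.assoc]

lemma j_nat {A B : C} (f : A ⟶ B) :
    T.toFunctor.map f ≫ jOf S T U r B = jOf S T U r A ≫ U.toFunctor.map f := by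
  have h : T.toFunctor.map f ≫ S.η.app (T.toFunctor.obj B)
      = S.η.app (T.toFunctor.obj A) ≫ S.toFunctor.map (T.toFunctor.map f) := by
    simpa using S.η.naturality (T.toFunctor.map f)
  simp only [jOf]
  rw [← Category.assoc, h, Category.assoc, r_nat, Category.assoc]

lemma muU_nat {A B : C} (f : A ⟶ B) :
    U.toFunctor.map (U.toFunctor.map f) ≫ U.μ.app B = U.μ.app A ≫ U.toFunctor.map f :=
  U.μ.naturality f

lemma muT_nat {A B : C} (f : A ⟶ B) :
    T.toFunctor.map (T.toFunctor.map f) ≫ T.μ.app B = T.μ.app A ≫ T.toFunctor.map f :=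
  T.μ.naturality f


lemma leftT (A : C) : T.η.app (T.toFunctor.obj A) ≫ T.μ.app A = 𝟙 (T.toFunctor.obj A) := by
  simpa using T.left_unit A

lemma rightU (A : C) :
    U.toFunctor.map (U.η.app A) ≫ U.μ.app A = 𝟙 (U.toFunctor.obj A) := by
  simpa using U.right_unit A

lemma assocU (A : C) :
    U.toFunctor.map (U.μ.app A) ≫ U.μ.app A = U.μ.app (U.toFunctor.obj A) ≫ U.μ.app A :=
  U.assoc A

section Keys

/-- `η^S ≫ i = η^U`. -/
lemma keyH (ax1 : ∀ X : C, T.η.app X ≫ S.η.app (T.toFunctor.obj X) ≫ r.app X = U.η.app X)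
    (X : C) : S.η.app X ≫ iOf S T U r X = U.η.app X := by
  have h : S.η.app X ≫ S.toFunctor.map (T.η.app X)
      = T.η.app X ≫ S.η.app (T.toFunctor.obj X) := by
    simpa using (S.η.naturality (T.η.app X)).symm
  simp only [iOf]
  rw [← Category.assoc, h, Category.assoc, ax1 X]

/-- `s ≫ iT ≫ Uj ≫ μ^U = 1`. -/
lemma keyA (hretr : ∀ X : C, s.app X ≫ r.app X = 𝟙 (U.toFunctor.obj X))
    (ax3 : ∀ X : C, S.toFunctor.map (T.μ.app X) ≫ r.app X =
      r.app (T.toFunctor.obj X) ≫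
        U.toFunctor.map (S.η.app (T.toFunctor.obj X) ≫ r.app X) ≫ U.μ.app X)
    (A : C) :
    s.app A ≫ iOf S T U r (T.toFunctor.obj A) ≫
      U.toFunctor.map (jOf S T U r A) ≫ U.μ.app A = 𝟙 (U.toFunctor.obj A) := by
  simp only [iOf, jOf, Category.assoc]
  rw [← ax3 A, ← Functor.map_comp_assoc, leftT, CategoryTheory.Functor.map_id,
    Category.id_comp, hretr]

/-- `sT ≫ Sμ^T = Uj ≫ μ^U ≫ s`. -/
lemma keyF (hretr : ∀ X : C, s.app X ≫ r.app X = 𝟙 (U.toFunctor.obj X))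
    (ax3 : ∀ X : C, S.toFunctor.map (T.μ.app X) ≫ r.app X =
      r.app (T.toFunctor.obj X) ≫
        U.toFunctor.map (S.η.app (T.toFunctor.obj X) ≫ r.app X) ≫ U.μ.app X)
    (ax5 : ∀ X : C, S.toFunctor.map (T.μ.app X) ≫ r.app X ≫ s.app X =
      (r.app (T.toFunctor.obj X) ≫ s.app (T.toFunctor.obj X)) ≫
        S.toFunctor.map (T.μ.app X))
    (X : C) :
    s.app (T.toFunctor.obj X) ≫ S.toFunctor.map (T.μ.app X) =
      U.toFunctor.map (jOf S T U r X) ≫ U.μ.app X ≫ s.app X := by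
  simp only [jOf]
  calc s.app (T.toFunctor.obj X) ≫ S.toFunctor.map (T.μ.app X)
      = s.app (T.toFunctor.obj X) ≫ (r.app (T.toFunctor.obj X) ≫ s.app (T.toFunctor.obj X)) ≫
          S.toFunctor.map (T.μ.app X) := by
        rw [← Category.assoc, ← Category.assoc, hretr, Category.id_comp]
    _ = s.app (T.toFunctor.obj X) ≫ S.toFunctor.map (T.μ.app X) ≫ r.app X ≫ s.app X := by
        rw [← ax5 X]
    _ = s.app (T.toFunctor.obj X) ≫ (r.app (T.toFunctor.obj X) ≫
          U.toFunctor.map (S.η.app (T.toFunctor.obj X) ≫ r.app X) ≫ U.μ.app X) ≫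
          s.app X := by rw [← Category.assoc (S.toFunctor.map (T.μ.app X)), ax3 X]
    _ = U.toFunctor.map (S.η.app (T.toFunctor.obj X) ≫ r.app X) ≫ U.μ.app X ≫
          s.app X := by
        rw [Category.assoc, ← Category.assoc (s.app (T.toFunctor.obj X)), hretr,
          Category.id_comp, Category.assoc]

/-- ax2 in folded form. -/
lemma ax2' (ax2 : ∀ X : C, S.μ.app (T.toFunctor.obj X) ≫ r.app X =
      S.toFunctor.map (r.app X) ≫
        (S.toFunctor.map (T.η.app (U.toFunctor.obj X)) ≫ r.app (U.toFunctor.obj X)) ≫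
        U.μ.app X) (X : C) :
    S.μ.app (T.toFunctor.obj X) ≫ r.app X =
      S.toFunctor.map (r.app X) ≫ iOf S T U r (U.toFunctor.obj X) ≫ U.μ.app X :=
  ax2 X

/-- ax3 in folded form. -/
lemma ax3' (ax3 : ∀ X : C, S.toFunctor.map (T.μ.app X) ≫ r.app X =
      r.app (T.toFunctor.obj X) ≫
        U.toFunctor.map (S.η.app (T.toFunctor.obj X) ≫ r.app X) ≫ U.μ.app X) (X : C) :
    S.toFunctor.map (T.μ.app X) ≫ r.app X =
      r.app (T.toFunctor.obj X) ≫ U.toFunctor.map (jOf S T U r X) ≫ U.μ.app X :=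
  ax3 X

/-- ax6 in folded form. -/
lemma ax6' (ax6 : ∀ X : C,
      S.toFunctor.map
          ((S.η.app (T.toFunctor.obj (U.toFunctor.obj X)) ≫ r.app (U.toFunctor.obj X)) ≫
            U.μ.app X ≫ s.app X) ≫
        S.μ.app (T.toFunctor.obj X) ≫ r.app X ≫ s.app X =
      (r.app (U.toFunctor.obj X) ≫ s.app (U.toFunctor.obj X)) ≫
        S.toFunctor.map
          ((S.η.app (T.toFunctor.obj (U.toFunctor.obj X)) ≫ r.app (U.toFunctor.obj X)) ≫
            U.μ.app X ≫ s.app X) ≫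
        S.μ.app (T.toFunctor.obj X)) (X : C) :
    S.toFunctor.map (phiOf S T U r s X) ≫ S.μ.app (T.toFunctor.obj X) ≫ r.app X ≫ s.app X =
      (r.app (U.toFunctor.obj X) ≫ s.app (U.toFunctor.obj X)) ≫
        S.toFunctor.map (phiOf S T U r s X) ≫ S.μ.app (T.toFunctor.obj X) :=
  ax6 X

/-- `μ^S ≫ i = iS ≫ Ui ≫ μ^U`. -/
lemma keyD (ax2 : ∀ X : C, S.μ.app (T.toFunctor.obj X) ≫ r.app X =
      S.toFunctor.map (r.app X) ≫
        (S.toFunctor.map (T.η.app (U.toFunctor.obj X)) ≫ r.app (U.toFunctor.obj X)) ≫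
        U.μ.app X) (X : C) :
    S.μ.app X ≫ iOf S T U r X =
      iOf S T U r (S.toFunctor.obj X) ≫ U.toFunctor.map (iOf S T U r X) ≫ U.μ.app X := by
  have hμ : S.toFunctor.map (S.toFunctor.map (T.η.app X)) ≫ S.μ.app (T.toFunctor.obj X)
      = S.μ.app X ≫ S.toFunctor.map (T.η.app X) := S.μ.naturality (T.η.app X)
  calc S.μ.app X ≫ iOf S T U r X
      = S.toFunctor.map (S.toFunctor.map (T.η.app X)) ≫ S.μ.app (T.toFunctor.obj X) ≫
          r.app X := by
        simp only [iOf, ← Category.assoc]; rw [hμ]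
    _ = S.toFunctor.map (S.toFunctor.map (T.η.app X)) ≫ S.toFunctor.map (r.app X) ≫
          iOf S T U r (U.toFunctor.obj X) ≫ U.μ.app X := by rw [ax2' S T U r ax2 X]
    _ = S.toFunctor.map (iOf S T U r X) ≫ iOf S T U r (U.toFunctor.obj X) ≫ U.μ.app X := by
        rw [← Functor.map_comp_assoc]; rfl
    _ = iOf S T U r (S.toFunctor.obj X) ≫ U.toFunctor.map (iOf S T U r X) ≫ U.μ.app X := by
        rw [← Category.assoc, i_nat, Category.assoc]

/-- `μ^T ≫ j = jT ≫ Uj ≫ μ^U`. -/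
lemma keyE (ax3 : ∀ X : C, S.toFunctor.map (T.μ.app X) ≫ r.app X =
      r.app (T.toFunctor.obj X) ≫
        U.toFunctor.map (S.η.app (T.toFunctor.obj X) ≫ r.app X) ≫ U.μ.app X) (A : C) :
    T.μ.app A ≫ jOf S T U r A =
      jOf S T U r (T.toFunctor.obj A) ≫ U.toFunctor.map (jOf S T U r A) ≫ U.μ.app A := by
  have hη : T.μ.app A ≫ S.η.app (T.toFunctor.obj A)
      = S.η.app (T.toFunctor.obj (T.toFunctor.obj A)) ≫ S.toFunctor.map (T.μ.app A) := by
    simpa using S.η.naturality (T.μ.app A)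
  calc T.μ.app A ≫ jOf S T U r A
      = S.η.app (T.toFunctor.obj (T.toFunctor.obj A)) ≫ S.toFunctor.map (T.μ.app A) ≫
          r.app A := by
        simp only [jOf, ← Category.assoc]; rw [hη]
    _ = S.η.app (T.toFunctor.obj (T.toFunctor.obj A)) ≫ r.app (T.toFunctor.obj A) ≫
          U.toFunctor.map (jOf S T U r A) ≫ U.μ.app A := by rw [ax3' S T U r ax3 A]
    _ = jOf S T U r (T.toFunctor.obj A) ≫ U.toFunctor.map (jOf S T U r A) ≫ U.μ.app A := by
        simp only [jOf, Category.assoc]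

/-- `φ ≫ iT ≫ Uj ≫ μ^U = jU ≫ μ^U`. -/
lemma keyG (hretr : ∀ X : C, s.app X ≫ r.app X = 𝟙 (U.toFunctor.obj X))
    (ax3 : ∀ X : C, S.toFunctor.map (T.μ.app X) ≫ r.app X =
      r.app (T.toFunctor.obj X) ≫
        U.toFunctor.map (S.η.app (T.toFunctor.obj X) ≫ r.app X) ≫ U.μ.app X) (X : C) :
    phiOf S T U r s X ≫ iOf S T U r (T.toFunctor.obj X) ≫
        U.toFunctor.map (jOf S T U r X) ≫ U.μ.app X =
      jOf S T U r (U.toFunctor.obj X) ≫ U.μ.app X := by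
  simp only [phiOf, Category.assoc]
  rw [keyA S T U r s hretr ax3 X, Category.comp_id]

/-- `φ ≫ r = jU ≫ μ^U`. -/
lemma keyFR (hretr : ∀ X : C, s.app X ≫ r.app X = 𝟙 (U.toFunctor.obj X)) (X : C) :
    phiOf S T U r s X ≫ r.app X = jOf S T U r (U.toFunctor.obj X) ≫ U.μ.app X := by
  simp only [phiOf, Category.assoc]
  rw [hretr, Category.comp_id]

/-- `sU ≫ Sφ ≫ μ^S T = μ^U ≫ s`. -/
lemma keyC (hretr : ∀ X : C, s.app X ≫ r.app X = 𝟙 (U.toFunctor.obj X))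
    (ax2 : ∀ X : C, S.μ.app (T.toFunctor.obj X) ≫ r.app X =
      S.toFunctor.map (r.app X) ≫
        (S.toFunctor.map (T.η.app (U.toFunctor.obj X)) ≫ r.app (U.toFunctor.obj X)) ≫
        U.μ.app X)
    (ax3 : ∀ X : C, S.toFunctor.map (T.μ.app X) ≫ r.app X =
      r.app (T.toFunctor.obj X) ≫
        U.toFunctor.map (S.η.app (T.toFunctor.obj X) ≫ r.app X) ≫ U.μ.app X)
    (ax6 : ∀ X : C,
      S.toFunctor.map
          ((S.η.app (T.toFunctor.obj (U.toFunctor.obj X)) ≫ r.app (U.toFunctor.obj X)) ≫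
            U.μ.app X ≫ s.app X) ≫
        S.μ.app (T.toFunctor.obj X) ≫ r.app X ≫ s.app X =
      (r.app (U.toFunctor.obj X) ≫ s.app (U.toFunctor.obj X)) ≫
        S.toFunctor.map
          ((S.η.app (T.toFunctor.obj (U.toFunctor.obj X)) ≫ r.app (U.toFunctor.obj X)) ≫
            U.μ.app X ≫ s.app X) ≫
        S.μ.app (T.toFunctor.obj X)) (X : C) :
    s.app (U.toFunctor.obj X) ≫ S.toFunctor.map (phiOf S T U r s X) ≫
        S.μ.app (T.toFunctor.obj X) =
      U.μ.app X ≫ s.app X := by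
  calc s.app (U.toFunctor.obj X) ≫ S.toFunctor.map (phiOf S T U r s X) ≫
        S.μ.app (T.toFunctor.obj X)
      = ((s.app (U.toFunctor.obj X) ≫ r.app (U.toFunctor.obj X)) ≫ s.app (U.toFunctor.obj X)) ≫
          S.toFunctor.map (phiOf S T U r s X) ≫ S.μ.app (T.toFunctor.obj X) := by
        rw [hretr, Category.id_comp]
    _ = s.app (U.toFunctor.obj X) ≫ (r.app (U.toFunctor.obj X) ≫ s.app (U.toFunctor.obj X)) ≫
          S.toFunctor.map (phiOf S T U r s X) ≫ S.μ.app (T.toFunctor.obj X) := by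
        simp only [Category.assoc]
    _ = s.app (U.toFunctor.obj X) ≫ S.toFunctor.map (phiOf S T U r s X) ≫
          S.μ.app (T.toFunctor.obj X) ≫ r.app X ≫ s.app X := by
        rw [← ax6' S T U r s ax6 X]
    _ = s.app (U.toFunctor.obj X) ≫ S.toFunctor.map (phiOf S T U r s X) ≫
          S.toFunctor.map (r.app X) ≫ iOf S T U r (U.toFunctor.obj X) ≫ U.μ.app X ≫
          s.app X := by
        rw [reassoc_of% (ax2' S T U r ax2 X)]
    _ = s.app (U.toFunctor.obj X) ≫ S.toFunctor.map (phiOf S T U r s X ≫ r.app X) ≫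
          iOf S T U r (U.toFunctor.obj X) ≫ U.μ.app X ≫ s.app X := by
        rw [← Functor.map_comp_assoc]
    _ = s.app (U.toFunctor.obj X) ≫
          S.toFunctor.map (jOf S T U r (U.toFunctor.obj X) ≫ U.μ.app X) ≫
          iOf S T U r (U.toFunctor.obj X) ≫ U.μ.app X ≫ s.app X := by
        rw [keyFR S T U r s hretr X]
    _ = s.app (U.toFunctor.obj X) ≫ iOf S T U r (T.toFunctor.obj (U.toFunctor.obj X)) ≫
          U.toFunctor.map (jOf S T U r (U.toFunctor.obj X) ≫ U.μ.app X) ≫ U.μ.app X ≫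
          s.app X := by
        rw [reassoc_of% (i_nat S T U r (jOf S T U r (U.toFunctor.obj X) ≫ U.μ.app X))]
    _ = s.app (U.toFunctor.obj X) ≫ iOf S T U r (T.toFunctor.obj (U.toFunctor.obj X)) ≫
          U.toFunctor.map (jOf S T U r (U.toFunctor.obj X)) ≫
          U.μ.app (U.toFunctor.obj X) ≫ U.μ.app X ≫ s.app X := by
        rw [Functor.map_comp_assoc, reassoc_of% (assocU U X)]
    _ = U.μ.app X ≫ s.app X := by
        rw [reassoc_of% (keyA S T U r s hretr ax3 (U.toFunctor.obj X))]

end Keys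

end DRAux

/-- A distributing retraction of `ST` onto `U` (Definition 2.2 of the paper),
stated componentwise.  Here `ST` is the composite functor `X ↦ S (T X)`,
`i := r ∘ S η^T` and `j := r ∘ η^S T`. -/
theorem distributing_retraction_gives_weak_distributive_law {C : Type u} [Category.{v} C] (S T U : Monad C)
    (r : T.toFunctor ⋙ S.toFunctor ⟶ U.toFunctor)
    (s : U.toFunctor ⟶ T.toFunctor ⋙ S.toFunctor)
    -- `r ∘ s = id_U`
    (hretr : ∀ X : C, s.app X ≫ r.app X = 𝟙 (U.toFunctor.obj X))
    -- (1) `r ∘ η^S η^T = η^U`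
    (ax1 : ∀ X : C, T.η.app X ≫ S.η.app (T.toFunctor.obj X) ≫ r.app X = U.η.app X)
    -- (2) `r ∘ μ^S T = μ^U ∘ (i * r)`
    (ax2 : ∀ X : C, S.μ.app (T.toFunctor.obj X) ≫ r.app X =
      S.toFunctor.map (r.app X) ≫
        (S.toFunctor.map (T.η.app (U.toFunctor.obj X)) ≫ r.app (U.toFunctor.obj X)) ≫
        U.μ.app X)
    -- (3) `r ∘ S μ^T = μ^U ∘ (r * j)`
    (ax3 : ∀ X : C, S.toFunctor.map (T.μ.app X) ≫ r.app X =
      r.app (T.toFunctor.obj X) ≫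
        U.toFunctor.map (S.η.app (T.toFunctor.obj X) ≫ r.app X) ≫ U.μ.app X)
    -- (4) `e ∘ η^S T = η^S T` where `e := s ∘ r`
    (ax4 : ∀ X : C, S.η.app (T.toFunctor.obj X) ≫ r.app X ≫ s.app X =
      S.η.app (T.toFunctor.obj X))
    -- (5) `e ∘ S μ^T = S μ^T ∘ e T`
    (ax5 : ∀ X : C, S.toFunctor.map (T.μ.app X) ≫ r.app X ≫ s.app X =
      (r.app (T.toFunctor.obj X) ≫ s.app (T.toFunctor.obj X)) ≫
        S.toFunctor.map (T.μ.app X))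
    -- (6) `e ∘ (s ∘ μ^U ∘ j U)^{#S} = (s ∘ μ^U ∘ j U)^{#S} ∘ e U`
    (ax6 : ∀ X : C,
      S.toFunctor.map
          ((S.η.app (T.toFunctor.obj (U.toFunctor.obj X)) ≫ r.app (U.toFunctor.obj X)) ≫
            U.μ.app X ≫ s.app X) ≫
        S.μ.app (T.toFunctor.obj X) ≫ r.app X ≫ s.app X =
      (r.app (U.toFunctor.obj X) ≫ s.app (U.toFunctor.obj X)) ≫
        S.toFunctor.map
          ((S.η.app (T.toFunctor.obj (U.toFunctor.obj X)) ≫ r.app (U.toFunctor.obj X)) ≫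
            U.μ.app X ≫ s.app X) ≫
        S.μ.app (T.toFunctor.obj X)) :
    -- `λ ∘ T η^S = η^S T`
    (∀ X : C, T.toFunctor.map (S.η.app X) ≫ lamOf S T U r s X =
      S.η.app (T.toFunctor.obj X)) ∧
    -- `λ ∘ T μ^S = μ^S T ∘ S λ ∘ λ S`
    (∀ X : C, T.toFunctor.map (S.μ.app X) ≫ lamOf S T U r s X =
      lamOf S T U r s (S.toFunctor.obj X) ≫ S.toFunctor.map (lamOf S T U r s X) ≫
        S.μ.app (T.toFunctor.obj X)) ∧
    -- `λ ∘ μ^T S = S μ^T ∘ λ T ∘ T λ`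
    (∀ X : C, T.μ.app (S.toFunctor.obj X) ≫ lamOf S T U r s X =
      T.toFunctor.map (lamOf S T U r s X) ≫ lamOf S T U r s (T.toFunctor.obj X) ≫
        S.toFunctor.map (T.μ.app X)) := by
  open DRAux in
  refine ⟨?_, ?_, ?_⟩
  · -- unit law
    intro X
    rw [lamOf_eq, ← Functor.map_comp_assoc, keyH (S := S) (T := T) (U := U) (r := r) ax1 X]
    simp only [phiOf]
    rw [reassoc_of% (j_nat (S := S) (T := T) (U := U) (r := r) (U.η.app X)),
      reassoc_of% (rightU (U := U) X)]
    simp only [jOf, Category.assoc]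
    rw [ax4 X]
  · -- multiplication law for S
    intro X
    trans (jOf S T U r (S.toFunctor.obj (S.toFunctor.obj X)) ≫
      U.toFunctor.map (iOf S T U r (S.toFunctor.obj X)) ≫ U.μ.app (S.toFunctor.obj X) ≫
      U.toFunctor.map (iOf S T U r X) ≫ U.μ.app X ≫ s.app X)
    · rw [lamOf_eq, ← Functor.map_comp_assoc,
        keyD (S := S) (T := T) (U := U) (r := r) ax2 X]
      simp only [phiOf]
      rw [reassoc_of% (j_nat (S := S) (T := T) (U := U) (r := r)
        (iOf S T U r (S.toFunctor.obj X) ≫ U.toFunctor.map (iOf S T U r X) ≫ U.μ.app X))]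
      simp only [Functor.map_comp, Category.assoc]
      rw [reassoc_of% (assocU (U := U) X),
        reassoc_of% (muU_nat (U := U) (iOf S T U r X))]
    · rw [lamOf_eq S T U r s (S.toFunctor.obj X)]
      simp only [phiOf, Category.assoc]
      rw [lamOf_eq S T U r s X, Functor.map_comp]
      simp only [Category.assoc]
      rw [reassoc_of% (s_nat (S := S) (T := T) (U := U) (s := s) (iOf S T U r X)),
        keyC S T U r s hretr ax2 ax3 ax6 X,
        reassoc_of% (j_nat (S := S) (T := T) (U := U) (r := r)
          (iOf S T U r (S.toFunctor.obj X)))]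
  · -- multiplication law for T
    intro X
    have hlam : lamOf S T U r s X ≫ iOf S T U r (T.toFunctor.obj X) ≫
        U.toFunctor.map (jOf S T U r X) ≫ U.μ.app X =
        jOf S T U r (S.toFunctor.obj X) ≫ U.toFunctor.map (iOf S T U r X) ≫ U.μ.app X := by
      simp only [lamOf_eq, Category.assoc]
      rw [keyG S T U r s hretr ax3 X,
        reassoc_of% (j_nat (S := S) (T := T) (U := U) (r := r) (iOf S T U r X))]
    trans (jOf S T U r (T.toFunctor.obj (S.toFunctor.obj X)) ≫
      U.toFunctor.map (jOf S T U r (S.toFunctor.obj X)) ≫ U.μ.app (S.toFunctor.obj X) ≫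
      U.toFunctor.map (iOf S T U r X) ≫ U.μ.app X ≫ s.app X)
    · rw [lamOf_eq, ← reassoc_of% (muT_nat (T := T) (iOf S T U r X))]
      simp only [phiOf]
      rw [reassoc_of% (keyE (S := S) (T := T) (U := U) (r := r) ax3 (U.toFunctor.obj X)),
        reassoc_of% (j_nat (S := S) (T := T) (U := U) (r := r)
          (T.toFunctor.map (iOf S T U r X))),
        ← Functor.map_comp_assoc,
        j_nat (S := S) (T := T) (U := U) (r := r) (iOf S T U r X),
        Functor.map_comp_assoc,
        reassoc_of% (muU_nat (U := U) (iOf S T U r X))]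
    · rw [lamOf_eq S T U r s (T.toFunctor.obj X)]
      simp only [phiOf, Category.assoc]
      rw [keyF S T U r s hretr ax3 ax5 X,
        ← reassoc_of% (muU_nat (U := U) (jOf S T U r X)),
        ← reassoc_of% (assocU (U := U) X),
        reassoc_of% (j_nat (S := S) (T := T) (U := U) (r := r) (iOf S T U r (T.toFunctor.obj X))),
        reassoc_of% (j_nat (S := S) (T := T) (U := U) (r := r) (lamOf S T U r s X)),
        ← Functor.map_comp_assoc, ← Functor.map_comp_assoc, ← Functor.map_comp_assoc]
      simp only [Category.assoc]
      rw [hlam, Functor.map_comp_assoc, Functor.map_comp_assoc,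
        reassoc_of% (assocU (U := U) X),
        reassoc_of% (muU_nat (U := U) (iOf S T U r X))]
end

section
/- Given a distributing retraction (r, s) of ST onto U with associated λ := s ∘ μ^U ∘ (j * i), the transformation λ is a distributive law (i.e., additionally satisfies λ ∘ η^T S = S η^T) if and only if e := s ∘ r is the identity, if and only if (r, s) is an isomorphism of functors. -/
open CategoryTheory

universe v u

/-- A distributing retraction of `ST` onto `U` (Definition 2.2 of the paper),
stated componentwise.  Here `ST` is the composite functor `X ↦ S (T X)`,
`i := r ∘ S η^T` and `j := r ∘ η^S T`. -/
theorem distributing_retraction_distributive_iff_iso {C : Type u} [Category.{v} C] (S T U : Monad C)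
    (r : T.toFunctor ⋙ S.toFunctor ⟶ U.toFunctor)
    (s : U.toFunctor ⟶ T.toFunctor ⋙ S.toFunctor)
    -- `r ∘ s = id_U`
    (hretr : ∀ X : C, s.app X ≫ r.app X = 𝟙 (U.toFunctor.obj X))
    -- (1) `r ∘ η^S η^T = η^U`
    (ax1 : ∀ X : C, T.η.app X ≫ S.η.app (T.toFunctor.obj X) ≫ r.app X = U.η.app X)
    -- (2) `r ∘ μ^S T = μ^U ∘ (i * r)`
    (ax2 : ∀ X : C, S.μ.app (T.toFunctor.obj X) ≫ r.app X =
      S.toFunctor.map (r.app X) ≫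
        (S.toFunctor.map (T.η.app (U.toFunctor.obj X)) ≫ r.app (U.toFunctor.obj X)) ≫
        U.μ.app X)
    -- (3) `r ∘ S μ^T = μ^U ∘ (r * j)`
    (ax3 : ∀ X : C, S.toFunctor.map (T.μ.app X) ≫ r.app X =
      r.app (T.toFunctor.obj X) ≫
        U.toFunctor.map (S.η.app (T.toFunctor.obj X) ≫ r.app X) ≫ U.μ.app X)
    -- (4) `e ∘ η^S T = η^S T` where `e := s ∘ r`
    (ax4 : ∀ X : C, S.η.app (T.toFunctor.obj X) ≫ r.app X ≫ s.app X =
      S.η.app (T.toFunctor.obj X))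
    -- (5) `e ∘ S μ^T = S μ^T ∘ e T`
    (ax5 : ∀ X : C, S.toFunctor.map (T.μ.app X) ≫ r.app X ≫ s.app X =
      (r.app (T.toFunctor.obj X) ≫ s.app (T.toFunctor.obj X)) ≫
        S.toFunctor.map (T.μ.app X))
    -- (6) `e ∘ (s ∘ μ^U ∘ j U)^{#S} = (s ∘ μ^U ∘ j U)^{#S} ∘ e U`
    (ax6 : ∀ X : C,
      S.toFunctor.map
          ((S.η.app (T.toFunctor.obj (U.toFunctor.obj X)) ≫ r.app (U.toFunctor.obj X)) ≫
            U.μ.app X ≫ s.app X) ≫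
        S.μ.app (T.toFunctor.obj X) ≫ r.app X ≫ s.app X =
      (r.app (U.toFunctor.obj X) ≫ s.app (U.toFunctor.obj X)) ≫
        S.toFunctor.map
          ((S.η.app (T.toFunctor.obj (U.toFunctor.obj X)) ≫ r.app (U.toFunctor.obj X)) ≫
            U.μ.app X ≫ s.app X) ≫
        S.μ.app (T.toFunctor.obj X)) :
    -- `λ` is a distributive law iff `e = s ∘ r` is the identity, iff `(r, s)` is an iso
    ((∀ X : C, T.η.app (S.toFunctor.obj X) ≫ lamOf S T U r s X =
        S.toFunctor.map (T.η.app X)) ↔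
      (∀ X : C, r.app X ≫ s.app X = 𝟙 (S.toFunctor.obj (T.toFunctor.obj X)))) ∧
    ((∀ X : C, r.app X ≫ s.app X = 𝟙 (S.toFunctor.obj (T.toFunctor.obj X))) ↔ IsIso r) := by
  -- abbreviations
  have key : ∀ X : C, T.η.app (S.toFunctor.obj X) ≫ lamOf S T U r s X =
      S.toFunctor.map (T.η.app X) ≫ r.app X ≫ s.app X := by
    intro X
    unfold lamOf
    rw [← Category.assoc, ← T.η.naturality]
    simp only [Functor.id_map, Category.assoc]
    rw [reassoc_of% (ax1 (U.toFunctor.obj X)), Monad.left_unit_assoc]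
  constructor
  · constructor
    · intro hlam X
      -- condition (d): S ηT ≫ e = S ηT
      have d : ∀ Y : C, S.toFunctor.map (T.η.app Y) ≫ r.app Y ≫ s.app Y =
          S.toFunctor.map (T.η.app Y) := by
        intro Y; rw [← key Y, hlam Y]
      -- (g): S s ≫ μS ≫ e = S s ≫ μS
      have g : S.toFunctor.map (s.app X) ≫ S.μ.app (T.toFunctor.obj X) ≫
            r.app X ≫ s.app X =
          S.toFunctor.map (s.app X) ≫ S.μ.app (T.toFunctor.obj X) := by
        have h6 := ax6 X
        -- precompose with S.map (T.η.app (U.obj X))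
        have h6' := congrArg (fun k => S.toFunctor.map (T.η.app (U.toFunctor.obj X)) ≫ k) h6
        simp only [← Category.assoc] at h6'
        rw [← S.toFunctor.map_comp] at h6'
        simp only [Category.assoc] at h6'
        rw [reassoc_of% (ax1 (U.toFunctor.obj X)), Monad.left_unit_assoc] at h6'
        rw [reassoc_of% (d (U.toFunctor.obj X)), ← S.toFunctor.map_comp_assoc] at h6'
        rw [reassoc_of% (ax1 (U.toFunctor.obj X)), Monad.left_unit_assoc] at h6'
        simpa using h6'
      -- now e X = S j ≫ S s ≫ μS ≫ e = S j ≫ S s ≫ μS = id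
      have hj : S.toFunctor.map (S.η.app (T.toFunctor.obj X) ≫ r.app X) ≫
          S.toFunctor.map (s.app X) ≫ S.μ.app (T.toFunctor.obj X) = 𝟙 _ := by
        rw [← S.toFunctor.map_comp_assoc]
        simp only [Category.assoc]
        rw [ax4 X, Monad.right_unit]
      calc r.app X ≫ s.app X
          = (S.toFunctor.map (S.η.app (T.toFunctor.obj X) ≫ r.app X) ≫
              S.toFunctor.map (s.app X) ≫ S.μ.app (T.toFunctor.obj X)) ≫
              r.app X ≫ s.app X := by rw [hj, Category.id_comp]
        _ = S.toFunctor.map (S.η.app (T.toFunctor.obj X) ≫ r.app X) ≫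
              S.toFunctor.map (s.app X) ≫ S.μ.app (T.toFunctor.obj X) := by
              simp only [Category.assoc]; rw [g, hj]
        _ = 𝟙 _ := hj
    · intro he X
      rw [key X, he X, Category.comp_id]
  · constructor
    · intro he
      refine ⟨s, ?_, ?_⟩ <;> ext X <;> simp [he X, hretr X]
    · intro hiso X
      haveI : IsIso (r.app X) := inferInstance
      rw [← cancel_mono (r.app X), Category.assoc, hretr X]
      simp
end

section
/- Given a distributing retraction (r, s) of ST onto U with associated λ := s ∘ μ^U ∘ (j * i), the unit and multiplication of U are determined by η^U = r ∘ η^S η^T and μ^U = r ∘ μ^S μ^T ∘ S λ T ∘ (s * s). -/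
open CategoryTheory

universe v u

/-- A distributing retraction of `ST` onto `U` (Definition 2.2 of the paper),
stated componentwise.  Here `ST` is the composite functor `X ↦ S (T X)`,
`i := r ∘ S η^T` and `j := r ∘ η^S T`. -/
theorem distributing_retraction_determines_unit_mult {C : Type u} [Category.{v} C] (S T U : Monad C)
    (r : T.toFunctor ⋙ S.toFunctor ⟶ U.toFunctor)
    (s : U.toFunctor ⟶ T.toFunctor ⋙ S.toFunctor)
    -- `r ∘ s = id_U`
    (hretr : ∀ X : C, s.app X ≫ r.app X = 𝟙 (U.toFunctor.obj X))
    -- (1) `r ∘ η^S η^T = η^U`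
    (ax1 : ∀ X : C, T.η.app X ≫ S.η.app (T.toFunctor.obj X) ≫ r.app X = U.η.app X)
    -- (2) `r ∘ μ^S T = μ^U ∘ (i * r)`
    (ax2 : ∀ X : C, S.μ.app (T.toFunctor.obj X) ≫ r.app X =
      S.toFunctor.map (r.app X) ≫
        (S.toFunctor.map (T.η.app (U.toFunctor.obj X)) ≫ r.app (U.toFunctor.obj X)) ≫
        U.μ.app X)
    -- (3) `r ∘ S μ^T = μ^U ∘ (r * j)`
    (ax3 : ∀ X : C, S.toFunctor.map (T.μ.app X) ≫ r.app X =
      r.app (T.toFunctor.obj X) ≫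
        U.toFunctor.map (S.η.app (T.toFunctor.obj X) ≫ r.app X) ≫ U.μ.app X)
    -- (4) `e ∘ η^S T = η^S T` where `e := s ∘ r`
    (ax4 : ∀ X : C, S.η.app (T.toFunctor.obj X) ≫ r.app X ≫ s.app X =
      S.η.app (T.toFunctor.obj X))
    -- (5) `e ∘ S μ^T = S μ^T ∘ e T`
    (ax5 : ∀ X : C, S.toFunctor.map (T.μ.app X) ≫ r.app X ≫ s.app X =
      (r.app (T.toFunctor.obj X) ≫ s.app (T.toFunctor.obj X)) ≫
        S.toFunctor.map (T.μ.app X))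
    -- (6) `e ∘ (s ∘ μ^U ∘ j U)^{#S} = (s ∘ μ^U ∘ j U)^{#S} ∘ e U`
    (ax6 : ∀ X : C,
      S.toFunctor.map
          ((S.η.app (T.toFunctor.obj (U.toFunctor.obj X)) ≫ r.app (U.toFunctor.obj X)) ≫
            U.μ.app X ≫ s.app X) ≫
        S.μ.app (T.toFunctor.obj X) ≫ r.app X ≫ s.app X =
      (r.app (U.toFunctor.obj X) ≫ s.app (U.toFunctor.obj X)) ≫
        S.toFunctor.map
          ((S.η.app (T.toFunctor.obj (U.toFunctor.obj X)) ≫ r.app (U.toFunctor.obj X)) ≫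
            U.μ.app X ≫ s.app X) ≫
        S.μ.app (T.toFunctor.obj X)) :
    -- `η^U = r ∘ η^S η^T`
    (∀ X : C, U.η.app X = T.η.app X ≫ S.η.app (T.toFunctor.obj X) ≫ r.app X) ∧
    -- `μ^U = r ∘ μ^S μ^T ∘ S λ T ∘ (s * s)`
    (∀ X : C, U.μ.app X =
      U.toFunctor.map (s.app X) ≫ s.app (S.toFunctor.obj (T.toFunctor.obj X)) ≫
        S.toFunctor.map (lamOf S T U r s (T.toFunctor.obj X)) ≫
        S.toFunctor.map (S.toFunctor.map (T.μ.app X)) ≫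
        S.μ.app (T.toFunctor.obj X) ≫ r.app X) := by
  
  -- naturality of j := ηS T ≫ r
  have jnat : ∀ {A B : C} (f : A ⟶ B),
      T.map f ≫ S.η.app (T.obj B) ≫ r.app B = (S.η.app (T.obj A) ≫ r.app A) ≫ U.map f := by
    intro A B f
    have h1 := S.η.naturality (T.map f)
    have h2 := r.naturality f
    simp only [Functor.id_obj, Functor.id_map, Functor.comp_obj, Functor.comp_map] at h1 h2
    rw [← Category.assoc, h1, Category.assoc, h2, Category.assoc]
  -- naturality of i := S ηT ≫ r
  have inat : ∀ {A B : C} (f : A ⟶ B),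
      S.map f ≫ S.map (T.η.app B) ≫ r.app B = (S.map (T.η.app A) ≫ r.app A) ≫ U.map f := by
    intro A B f
    have h1 := T.η.naturality f
    have h2 := r.naturality f
    simp only [Functor.id_obj, Functor.id_map, Functor.comp_obj, Functor.comp_map] at h1 h2
    rw [← Category.assoc, ← S.map_comp, h1, S.map_comp, Category.assoc, h2, Category.assoc]
  -- key lemma: s ≫ S j ≫ i U ≫ μU = 𝟙
  have hb : ∀ Y : C,
      s.app Y ≫ S.map (S.η.app (T.obj Y) ≫ r.app Y) ≫
        S.map (T.η.app (U.obj Y)) ≫ r.app (U.obj Y) ≫ U.μ.app Y = 𝟙 (U.obj Y) := by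
    intro Y
    rw [reassoc_of% (inat (S.η.app (T.obj Y) ≫ r.app Y))]
    rw [← ax3 Y]
    rw [← S.map_comp_assoc, T.left_unit]
    simp [hretr Y]
  refine ⟨fun X => (ax1 X).symm, fun X => ?_⟩
  symm
  -- s ≫ S μT ≫ r = U j ≫ μU
  have h2 : s.app (T.obj X) ≫ S.map (T.μ.app X) ≫ r.app X =
      U.map (S.η.app (T.obj X) ≫ r.app X) ≫ U.μ.app X := by
    rw [ax3 X, reassoc_of% (hretr (T.obj X))]
  set a := S.map (S.η.app (T.obj X) ≫ r.app X) ≫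
      S.map (T.η.app (U.obj X)) ≫ r.app (U.obj X) ≫ U.μ.app X with ha
  have μn : U.map (U.map (S.η.app (T.obj X) ≫ r.app X)) ≫ U.μ.app (U.obj X) =
      U.μ.app (T.obj X) ≫ U.map (S.η.app (T.obj X) ≫ r.app X) := by
    simpa using U.μ.naturality (S.η.app (T.obj X) ≫ r.app X)
  have hg : (lamOf S T U r s (T.obj X) ≫ S.map (T.μ.app X)) ≫ r.app X =
      T.map a ≫ (S.η.app (T.obj (U.obj X)) ≫ r.app (U.obj X)) ≫ U.μ.app X := by
    rw [ha]
    simp only [lamOf, Category.assoc]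
    rw [h2]
    rw [← reassoc_of% μn]
    rw [← U.assoc]
    rw [← reassoc_of% (jnat (U.map (S.η.app (T.obj X) ≫ r.app X)))]
    rw [← reassoc_of% (jnat (U.μ.app X))]
    rw [← T.map_comp_assoc, ← T.map_comp_assoc]
    rw [reassoc_of% (inat (S.η.app (T.obj X) ≫ r.app X))]
    simp only [Category.assoc]
  have sn : s.app (S.obj (T.obj X)) ≫ S.map (T.map a) = U.map a ≫ s.app (U.obj X) := by
    simpa using (s.naturality a).symm
  rw [ax2 X]
  simp only [Category.assoc]
  rw [← S.map_comp_assoc, ← S.map_comp_assoc, hg]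
  rw [S.map_comp, S.map_comp]
  simp only [Category.assoc]
  rw [reassoc_of% sn]
  rw [reassoc_of% (inat (U.μ.app X))]
  rw [U.assoc]
  rw [reassoc_of% (hb (U.obj X))]
  rw [← U.map_comp_assoc, ha, hb X, U.map_id, Category.id_comp]
end

section
/- Given monads S and T on a category C and a weak distributive law λ : TS ⟹ ST, the natural transformation e := S μ^T ∘ λT ∘ η^T ST : ST ⟹ ST is idempotent, i.e., e ∘ e = e. -/
open CategoryTheory

universe v u

/-- The idempotent `e := S μ^T ∘ λ T ∘ η^T ST : ST ⟶ ST`, componentwise. -/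
def eOf {C : Type u} [Category.{v} C] (S T : Monad C)
    (lam : S.toFunctor ⋙ T.toFunctor ⟶ T.toFunctor ⋙ S.toFunctor) (X : C) :
    S.toFunctor.obj (T.toFunctor.obj X) ⟶ S.toFunctor.obj (T.toFunctor.obj X) :=
  T.η.app (S.toFunctor.obj (T.toFunctor.obj X)) ≫ lam.app (T.toFunctor.obj X) ≫
    S.toFunctor.map (T.μ.app X)

/-- Given monads `S`, `T` and a weak distributive law `λ : TS ⟶ ST` of `S` over `T`
(stated componentwise), with the idempotent `e := S μ^T ∘ λ T ∘ η^T ST`. -/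
theorem weak_distributive_law_e_idempotent {C : Type u} [Category.{v} C] (S T : Monad C)
    (lam : S.toFunctor ⋙ T.toFunctor ⟶ T.toFunctor ⋙ S.toFunctor)
    -- `λ ∘ T η^S = η^S T`
    (wdl1 : ∀ X : C, T.toFunctor.map (S.η.app X) ≫ lam.app X =
      S.η.app (T.toFunctor.obj X))
    -- `λ ∘ T μ^S = μ^S T ∘ S λ ∘ λ S`
    (wdl2 : ∀ X : C, T.toFunctor.map (S.μ.app X) ≫ lam.app X =
      lam.app (S.toFunctor.obj X) ≫ S.toFunctor.map (lam.app X) ≫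
        S.μ.app (T.toFunctor.obj X))
    -- `λ ∘ μ^T S = S μ^T ∘ λ T ∘ T λ`
    (wdl3 : ∀ X : C, T.μ.app (S.toFunctor.obj X) ≫ lam.app X =
      T.toFunctor.map (lam.app X) ≫ lam.app (T.toFunctor.obj X) ≫
        S.toFunctor.map (T.μ.app X)) :
    -- `e ∘ e = e`
    ∀ X : C, eOf S T lam X ≫ eOf S T lam X = eOf S T lam X := by
  intro X
  have n1 := reassoc_of% (T.η.naturality (S.toFunctor.map (T.μ.app X)))
  have n2 := reassoc_of% (lam.naturality (T.μ.app X))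
  have n3 := reassoc_of% (T.η.naturality (lam.app (T.toFunctor.obj X)))
  have w3 := reassoc_of% (wdl3 (T.toFunctor.obj X))
  simp only [eOf, Category.assoc]
  rw [n1, n2, n3, ← Functor.map_comp, Monad.assoc, Functor.map_comp, ← w3]
  simp
end

section
/- Given monads S, T on a category C, a weak distributive law λ of S over T, and a splitting (r : ST ⟹ U, s : U ⟹ ST) of the idempotent e := Sμ^T ∘ λT ∘ η^T ST (so s ∘ r = e and r ∘ s = id), defining η^U := r ∘ η^S η^T and μ^U := r ∘ μ^S μ^T ∘ SλT ∘ (s * s), the pair (r, s) is a distributing retraction of ST onto U and the associated law s ∘ μ^U ∘ (j * i) equals λ. -/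
open CategoryTheory

universe v u

/-- Given monads `S`, `T`, a weak distributive law `λ : TS ⟶ ST` of `S` over `T`,
and a splitting `(r, s)` of the idempotent `e := S μ^T ∘ λ T ∘ η^T ST` through a
functor `U`, with `η^U := r ∘ η^S η^T` and
`μ^U := r ∘ μ^S μ^T ∘ S λ T ∘ (s * s)` (assumed to make `U` a monad), the pair
`(r, s)` is a distributing retraction of `ST` onto `U`, and the associated law
`s ∘ μ^U ∘ (j * i)` equals `λ` (all stated componentwise, with
`i := r ∘ S η^T` and `j := r ∘ η^S T`). -/
theorem weak_distributive_law_gives_distributing_retraction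
    {C : Type u} [Category.{v} C] (S T : Monad C)
    (lam : S.toFunctor ⋙ T.toFunctor ⟶ T.toFunctor ⋙ S.toFunctor)
    -- `λ ∘ T η^S = η^S T`
    (wdl1 : ∀ X : C, T.toFunctor.map (S.η.app X) ≫ lam.app X =
      S.η.app (T.toFunctor.obj X))
    -- `λ ∘ T μ^S = μ^S T ∘ S λ ∘ λ S`
    (wdl2 : ∀ X : C, T.toFunctor.map (S.μ.app X) ≫ lam.app X =
      lam.app (S.toFunctor.obj X) ≫ S.toFunctor.map (lam.app X) ≫
        S.μ.app (T.toFunctor.obj X))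
    -- `λ ∘ μ^T S = S μ^T ∘ λ T ∘ T λ`
    (wdl3 : ∀ X : C, T.μ.app (S.toFunctor.obj X) ≫ lam.app X =
      T.toFunctor.map (lam.app X) ≫ lam.app (T.toFunctor.obj X) ≫
        S.toFunctor.map (T.μ.app X))
    (U : C ⥤ C)
    (r : T.toFunctor ⋙ S.toFunctor ⟶ U) (s : U ⟶ T.toFunctor ⋙ S.toFunctor)
    -- `s ∘ r = e`
    (hsplit : ∀ X : C, r.app X ≫ s.app X =
      T.η.app (S.toFunctor.obj (T.toFunctor.obj X)) ≫ lam.app (T.toFunctor.obj X) ≫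
        S.toFunctor.map (T.μ.app X))
    -- `r ∘ s = id`
    (hretr : ∀ X : C, s.app X ≫ r.app X = 𝟙 (U.obj X))
    (ηU : 𝟭 C ⟶ U) (μU : U ⋙ U ⟶ U)
    -- `η^U := r ∘ η^S η^T`
    (hηU : ∀ X : C, ηU.app X = T.η.app X ≫ S.η.app (T.toFunctor.obj X) ≫ r.app X)
    -- `μ^U := r ∘ μ^S μ^T ∘ S λ T ∘ (s * s)`
    (hμU : ∀ X : C, μU.app X =
      U.map (s.app X) ≫ s.app (S.toFunctor.obj (T.toFunctor.obj X)) ≫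
        S.toFunctor.map (lam.app (T.toFunctor.obj X)) ≫
        S.toFunctor.map (S.toFunctor.map (T.μ.app X)) ≫
        S.μ.app (T.toFunctor.obj X) ≫ r.app X)
    -- `(U, η^U, μ^U)` is assumed to be a monad
    (hUmon1 : ∀ X : C, ηU.app (U.obj X) ≫ μU.app X = 𝟙 (U.obj X))
    (hUmon2 : ∀ X : C, U.map (ηU.app X) ≫ μU.app X = 𝟙 (U.obj X))
    (hUmon3 : ∀ X : C, μU.app (U.obj X) ≫ μU.app X = U.map (μU.app X) ≫ μU.app X) :
    -- (1) `r ∘ η^S η^T = η^U`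
    (∀ X : C, T.η.app X ≫ S.η.app (T.toFunctor.obj X) ≫ r.app X = ηU.app X) ∧
    -- (2) `r ∘ μ^S T = μ^U ∘ (i * r)`
    (∀ X : C, S.μ.app (T.toFunctor.obj X) ≫ r.app X =
      S.toFunctor.map (r.app X) ≫
        (S.toFunctor.map (T.η.app (U.obj X)) ≫ r.app (U.obj X)) ≫ μU.app X) ∧
    -- (3) `r ∘ S μ^T = μ^U ∘ (r * j)`
    (∀ X : C, S.toFunctor.map (T.μ.app X) ≫ r.app X =
      r.app (T.toFunctor.obj X) ≫
        U.map (S.η.app (T.toFunctor.obj X) ≫ r.app X) ≫ μU.app X) ∧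
    -- (4) `e ∘ η^S T = η^S T`, where `e := s ∘ r`
    (∀ X : C, S.η.app (T.toFunctor.obj X) ≫ r.app X ≫ s.app X =
      S.η.app (T.toFunctor.obj X)) ∧
    -- (5) `e ∘ S μ^T = S μ^T ∘ e T`
    (∀ X : C, S.toFunctor.map (T.μ.app X) ≫ r.app X ≫ s.app X =
      (r.app (T.toFunctor.obj X) ≫ s.app (T.toFunctor.obj X)) ≫
        S.toFunctor.map (T.μ.app X)) ∧
    -- (6) `e ∘ (s ∘ μ^U ∘ j U)^{#S} = (s ∘ μ^U ∘ j U)^{#S} ∘ e U`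
    (∀ X : C,
      S.toFunctor.map
          ((S.η.app (T.toFunctor.obj (U.obj X)) ≫ r.app (U.obj X)) ≫
            μU.app X ≫ s.app X) ≫
        S.μ.app (T.toFunctor.obj X) ≫ r.app X ≫ s.app X =
      (r.app (U.obj X) ≫ s.app (U.obj X)) ≫
        S.toFunctor.map
          ((S.η.app (T.toFunctor.obj (U.obj X)) ≫ r.app (U.obj X)) ≫
            μU.app X ≫ s.app X) ≫
        S.μ.app (T.toFunctor.obj X)) ∧
    -- `s ∘ μ^U ∘ (j * i) = λ`
    (∀ X : C,
      T.toFunctor.map (S.toFunctor.map (T.η.app X) ≫ r.app X) ≫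
        (S.η.app (T.toFunctor.obj (U.obj X)) ≫ r.app (U.obj X)) ≫
        μU.app X ≫ s.app X = lam.app X) := by
  -- naturality helpers
  have natlam : ∀ {X Y : C} (f : X ⟶ Y),
      T.toFunctor.map (S.toFunctor.map f) ≫ lam.app Y =
        lam.app X ≫ S.toFunctor.map (T.toFunctor.map f) := by
    intro X Y f; simpa using lam.naturality f
  have natr : ∀ {X Y : C} (f : X ⟶ Y),
      S.toFunctor.map (T.toFunctor.map f) ≫ r.app Y = r.app X ≫ U.map f := by
    intro X Y f; simpa using r.naturality f
  have nats : ∀ {X Y : C} (f : X ⟶ Y),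
      U.map f ≫ s.app Y = s.app X ≫ S.toFunctor.map (T.toFunctor.map f) := by
    intro X Y f; simpa using s.naturality f
  have natηT : ∀ {X Y : C} (f : X ⟶ Y),
      f ≫ T.η.app Y = T.η.app X ≫ T.toFunctor.map f := by
    intro X Y f; simpa using T.η.naturality f
  have natηS : ∀ {X Y : C} (f : X ⟶ Y),
      f ≫ S.η.app Y = S.η.app X ≫ S.toFunctor.map f := by
    intro X Y f; simpa using S.η.naturality f
  have natμT : ∀ {X Y : C} (f : X ⟶ Y),
      T.toFunctor.map (T.toFunctor.map f) ≫ T.μ.app Y = T.μ.app X ≫ T.toFunctor.map f := by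
    intro X Y f; simpa using T.μ.naturality f
  have natμS : ∀ {X Y : C} (f : X ⟶ Y),
      S.toFunctor.map (S.toFunctor.map f) ≫ S.μ.app Y = S.μ.app X ≫ S.toFunctor.map f := by
    intro X Y f; simpa using S.μ.naturality f
  -- Lemma A : λ ≫ e = λ
  have lamE : ∀ X : C, lam.app X ≫ r.app X ≫ s.app X = lam.app X := by
    intro X
    rw [hsplit X, reassoc_of% natηT (lam.app X), ← wdl3 X]
    simp
  -- claim (4) : η^S T ≫ e = η^S T
  have claim4 : ∀ X : C, S.η.app (T.toFunctor.obj X) ≫ r.app X ≫ s.app X =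
      S.η.app (T.toFunctor.obj X) := by
    intro X
    rw [hsplit X, reassoc_of% natηT (S.η.app (T.toFunctor.obj X)),
      reassoc_of% wdl1 (T.toFunctor.obj X),
      ← natηS (X := T.toFunctor.obj (T.toFunctor.obj X)) (Y := T.toFunctor.obj X)
        (T.μ.app X)]
    simp
  -- Lemma B : S η^T ≫ e = η^T S ≫ λ
  have iE : ∀ X : C, S.toFunctor.map (T.η.app X) ≫ r.app X ≫ s.app X =
      T.η.app (S.toFunctor.obj X) ≫ lam.app X := by
    intro X
    rw [hsplit X, reassoc_of% natηT (S.toFunctor.map (T.η.app X)),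
      reassoc_of% natlam (T.η.app X), ← Functor.map_comp, T.right_unit]
    simp
  -- Lemma C : T e ≫ λ T ≫ S μ^T = λ T ≫ S μ^T
  have TeLam : ∀ X : C,
      T.toFunctor.map (r.app X ≫ s.app X) ≫ lam.app (T.toFunctor.obj X) ≫
        S.toFunctor.map (T.μ.app X) =
      lam.app (T.toFunctor.obj X) ≫ S.toFunctor.map (T.μ.app X) := by
    intro X
    rw [hsplit X]
    simp only [Functor.map_comp, Category.assoc]
    rw [reassoc_of% natlam (T.μ.app X)]
    have hw : S.toFunctor.map (T.toFunctor.map (T.μ.app X)) ≫ S.toFunctor.map (T.μ.app X) =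
        S.toFunctor.map (T.μ.app (T.toFunctor.obj X)) ≫ S.toFunctor.map (T.μ.app X) := by
      rw [← Functor.map_comp, ← Functor.map_comp, T.assoc X]
    rw [hw, ← reassoc_of% wdl3 (T.toFunctor.obj X)]
    simp
  -- claim (5) : S μ^T ≫ e = e T ≫ S μ^T
  have claim5 : ∀ X : C, S.toFunctor.map (T.μ.app X) ≫ r.app X ≫ s.app X =
      (r.app (T.toFunctor.obj X) ≫ s.app (T.toFunctor.obj X)) ≫
        S.toFunctor.map (T.μ.app X) := by
    intro X
    rw [hsplit X, hsplit (T.toFunctor.obj X),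
      reassoc_of% natηT (S.toFunctor.map (T.μ.app X)),
      reassoc_of% natlam (T.μ.app X)]
    have hw : S.toFunctor.map (T.toFunctor.map (T.μ.app X)) ≫ S.toFunctor.map (T.μ.app X) =
        S.toFunctor.map (T.μ.app (T.toFunctor.obj X)) ≫ S.toFunctor.map (T.μ.app X) := by
      rw [← Functor.map_comp, ← Functor.map_comp, T.assoc X]
    rw [hw]
    simp only [Category.assoc]
  -- μ^S T ≫ e expanded
  have muE : ∀ X : C, S.μ.app (T.toFunctor.obj X) ≫ r.app X ≫ s.app X =
      T.η.app (S.toFunctor.obj (S.toFunctor.obj (T.toFunctor.obj X))) ≫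
        lam.app (S.toFunctor.obj (T.toFunctor.obj X)) ≫
        S.toFunctor.map (lam.app (T.toFunctor.obj X)) ≫
        S.μ.app (T.toFunctor.obj (T.toFunctor.obj X)) ≫
        S.toFunctor.map (T.μ.app X) := by
    intro X
    rw [hsplit X, reassoc_of% natηT (S.μ.app (T.toFunctor.obj X)),
      reassoc_of% wdl2 (T.toFunctor.obj X)]
  -- Lemma D : S e ≫ μ^S T ≫ e = μ^S T ≫ e
  have lemD : ∀ X : C, S.toFunctor.map (r.app X ≫ s.app X) ≫
      S.μ.app (T.toFunctor.obj X) ≫ r.app X ≫ s.app X =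
      S.μ.app (T.toFunctor.obj X) ≫ r.app X ≫ s.app X := by
    intro X
    rw [muE X, reassoc_of% natηT (S.toFunctor.map (r.app X ≫ s.app X)),
      reassoc_of% natlam (r.app X ≫ s.app X),
      ← natμS (X := T.toFunctor.obj (T.toFunctor.obj X)) (Y := T.toFunctor.obj X)
        (T.μ.app X)]
    have hm : S.toFunctor.map (T.toFunctor.map (r.app X ≫ s.app X)) ≫
        S.toFunctor.map (lam.app (T.toFunctor.obj X)) ≫
        S.toFunctor.map (S.toFunctor.map (T.μ.app X)) =
        S.toFunctor.map (lam.app (T.toFunctor.obj X)) ≫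
        S.toFunctor.map (S.toFunctor.map (T.μ.app X)) := by
      simp only [← Functor.map_comp]
      rw [TeLam X]
    rw [reassoc_of% hm]
  have lemD' : ∀ X : C, S.toFunctor.map (r.app X) ≫ S.toFunctor.map (s.app X) ≫
      S.μ.app (T.toFunctor.obj X) ≫ r.app X = S.μ.app (T.toFunctor.obj X) ≫ r.app X := by
    intro X
    have h := congrArg (fun t => t ≫ r.app X) (lemD X)
    simp only [Category.assoc, Functor.map_comp] at h
    rw [hretr X, Category.comp_id] at h
    exact h
  -- claim (2)
  have claim2 : ∀ X : C, S.μ.app (T.toFunctor.obj X) ≫ r.app X =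
      S.toFunctor.map (r.app X) ≫
        (S.toFunctor.map (T.η.app (U.obj X)) ≫ r.app (U.obj X)) ≫ μU.app X := by
    intro X
    rw [hμU X]
    simp only [Category.assoc]
    rw [← reassoc_of% natr (s.app X)]
    have hw : S.toFunctor.map (T.η.app (U.obj X)) ≫
        S.toFunctor.map (T.toFunctor.map (s.app X)) =
        S.toFunctor.map (s.app X) ≫
          S.toFunctor.map (T.η.app (S.toFunctor.obj (T.toFunctor.obj X))) := by
      rw [← Functor.map_comp, ← Functor.map_comp,
        ← natηT (X := U.obj X) (Y := S.toFunctor.obj (T.toFunctor.obj X)) (s.app X)]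
    rw [reassoc_of% hw, reassoc_of% iE (S.toFunctor.obj (T.toFunctor.obj X)),
      reassoc_of% natμS (T.μ.app X), ← reassoc_of% wdl2 (T.toFunctor.obj X),
      ← reassoc_of% natηT (S.μ.app (T.toFunctor.obj X)),
      ← reassoc_of% hsplit X, hretr X, Category.comp_id, lemD' X]
  -- claim (3)
  have claim3 : ∀ X : C, S.toFunctor.map (T.μ.app X) ≫ r.app X =
      r.app (T.toFunctor.obj X) ≫
        U.map (S.η.app (T.toFunctor.obj X) ≫ r.app X) ≫ μU.app X := by
    intro X
    rw [hμU X]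
    have hu : U.map (S.η.app (T.toFunctor.obj X) ≫ r.app X) ≫ U.map (s.app X) =
        U.map (S.η.app (T.toFunctor.obj X)) := by
      rw [← Functor.map_comp, Category.assoc, claim4 X]
    rw [reassoc_of% hu, reassoc_of% nats (S.η.app (T.toFunctor.obj X))]
    have hw : S.toFunctor.map (T.toFunctor.map (S.η.app (T.toFunctor.obj X))) ≫
        S.toFunctor.map (lam.app (T.toFunctor.obj X)) =
        S.toFunctor.map (S.η.app (T.toFunctor.obj (T.toFunctor.obj X))) := by
      rw [← Functor.map_comp, wdl1 (T.toFunctor.obj X)]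
    rw [reassoc_of% hw]
    have hw2 : S.toFunctor.map (S.η.app (T.toFunctor.obj (T.toFunctor.obj X))) ≫
        S.toFunctor.map (S.toFunctor.map (T.μ.app X)) =
        S.toFunctor.map (T.μ.app X) ≫
          S.toFunctor.map (S.η.app (T.toFunctor.obj X)) := by
      rw [← Functor.map_comp,
        ← natηS (X := T.toFunctor.obj (T.toFunctor.obj X)) (Y := T.toFunctor.obj X)
          (T.μ.app X), Functor.map_comp]
    rw [reassoc_of% hw2, reassoc_of% S.right_unit (T.toFunctor.obj X)]
    have c5 := congrArg (fun t => t ≫ r.app X) (claim5 X)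
    simp only [Category.assoc] at c5
    rw [hretr X, Category.comp_id] at c5
    exact c5
  -- φ := j U ≫ μ^U ≫ s  equals  T s ≫ λ T ≫ S μ^T
  have claim_phi : ∀ X : C,
      (S.η.app (T.toFunctor.obj (U.obj X)) ≫ r.app (U.obj X)) ≫ μU.app X ≫ s.app X =
      T.toFunctor.map (s.app X) ≫ lam.app (T.toFunctor.obj X) ≫
        S.toFunctor.map (T.μ.app X) := by
    intro X
    rw [hμU X]
    simp only [Category.assoc]
    rw [← reassoc_of% natr (s.app X),
      ← reassoc_of% natηS (T.toFunctor.map (s.app X)),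
      reassoc_of% claim4 (S.toFunctor.obj (T.toFunctor.obj X)),
      ← reassoc_of% natηS (lam.app (T.toFunctor.obj X)),
      ← reassoc_of% natηS (S.toFunctor.map (T.μ.app X)),
      reassoc_of% S.left_unit (T.toFunctor.obj X), claim5 X]
    simp only [Category.assoc]
    rw [reassoc_of% lamE (T.toFunctor.obj X)]
  -- (**) : T ψ ≫ λ T ≫ S μ^T = μ^T U ≫ ψ
  have claim_psi : ∀ X : C,
      T.toFunctor.map (T.toFunctor.map (s.app X) ≫ lam.app (T.toFunctor.obj X) ≫
          S.toFunctor.map (T.μ.app X)) ≫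
        lam.app (T.toFunctor.obj X) ≫ S.toFunctor.map (T.μ.app X) =
      T.μ.app (U.obj X) ≫ T.toFunctor.map (s.app X) ≫ lam.app (T.toFunctor.obj X) ≫
        S.toFunctor.map (T.μ.app X) := by
    intro X
    simp only [Functor.map_comp, Category.assoc]
    rw [reassoc_of% natlam (T.μ.app X)]
    have hw : S.toFunctor.map (T.toFunctor.map (T.μ.app X)) ≫ S.toFunctor.map (T.μ.app X) =
        S.toFunctor.map (T.μ.app (T.toFunctor.obj X)) ≫ S.toFunctor.map (T.μ.app X) := by
      rw [← Functor.map_comp, ← Functor.map_comp, T.assoc X]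
    rw [hw, ← reassoc_of% wdl3 (T.toFunctor.obj X), reassoc_of% natμT (s.app X)]
  -- claim (6)
  have claim6 : ∀ X : C,
      S.toFunctor.map
          ((S.η.app (T.toFunctor.obj (U.obj X)) ≫ r.app (U.obj X)) ≫
            μU.app X ≫ s.app X) ≫
        S.μ.app (T.toFunctor.obj X) ≫ r.app X ≫ s.app X =
      (r.app (U.obj X) ≫ s.app (U.obj X)) ≫
        S.toFunctor.map
          ((S.η.app (T.toFunctor.obj (U.obj X)) ≫ r.app (U.obj X)) ≫
            μU.app X ≫ s.app X) ≫
        S.μ.app (T.toFunctor.obj X) := by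
    intro X
    rw [claim_phi X, muE X,
      reassoc_of% natηT (S.toFunctor.map (T.toFunctor.map (s.app X) ≫
        lam.app (T.toFunctor.obj X) ≫ S.toFunctor.map (T.μ.app X))),
      reassoc_of% natlam (T.toFunctor.map (s.app X) ≫
        lam.app (T.toFunctor.obj X) ≫ S.toFunctor.map (T.μ.app X)),
      ← natμS (X := T.toFunctor.obj (T.toFunctor.obj X)) (Y := T.toFunctor.obj X)
        (T.μ.app X)]
    have hm : S.toFunctor.map (T.toFunctor.map (T.toFunctor.map (s.app X) ≫
          lam.app (T.toFunctor.obj X) ≫ S.toFunctor.map (T.μ.app X))) ≫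
        S.toFunctor.map (lam.app (T.toFunctor.obj X)) ≫
        S.toFunctor.map (S.toFunctor.map (T.μ.app X)) =
        S.toFunctor.map (T.μ.app (U.obj X)) ≫
          S.toFunctor.map (T.toFunctor.map (s.app X)) ≫
          S.toFunctor.map (lam.app (T.toFunctor.obj X)) ≫
          S.toFunctor.map (S.toFunctor.map (T.μ.app X)) := by
      simp only [← Functor.map_comp]
      rw [claim_psi X]
    rw [reassoc_of% hm, hsplit (U.obj X)]
    simp only [Functor.map_comp, Category.assoc]
  -- claim (7) : s ∘ μ^U ∘ (j * i) = λ
  have claim7 : ∀ X : C,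
      T.toFunctor.map (S.toFunctor.map (T.η.app X) ≫ r.app X) ≫
        (S.η.app (T.toFunctor.obj (U.obj X)) ≫ r.app (U.obj X)) ≫
        μU.app X ≫ s.app X = lam.app X := by
    intro X
    rw [claim_phi X]
    have hw : T.toFunctor.map (S.toFunctor.map (T.η.app X) ≫ r.app X) ≫
        T.toFunctor.map (s.app X) =
        T.toFunctor.map (T.η.app (S.toFunctor.obj X)) ≫ T.toFunctor.map (lam.app X) := by
      rw [← Functor.map_comp, ← Functor.map_comp, Category.assoc, iE X]
    rw [reassoc_of% hw, ← wdl3 X]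
    simp
  exact ⟨fun X => (hηU X).symm, claim2, claim3, claim4, claim5, claim6, claim7⟩
end

section
/- Given monads S, T on a category C and a weak distributive law λ of S over T, with A := μ^S μ^T ∘ SλT : STST ⟹ ST and e := Sμ^T ∘ λT ∘ η^T ST, one has A ∘ e ST = e ∘ A and A ∘ ST η^S T = S μ^T. -/
open CategoryTheory

universe v u

/-- Given monads `S`, `T` and a weak distributive law `λ : TS ⟶ ST` of `S` over `T`
(stated componentwise), with the idempotent `e := S μ^T ∘ λ T ∘ η^T ST`. -/
theorem weak_distributive_law_A_lemmas {C : Type u} [Category.{v} C] (S T : Monad C)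
    (lam : S.toFunctor ⋙ T.toFunctor ⟶ T.toFunctor ⋙ S.toFunctor)
    -- `λ ∘ T η^S = η^S T`
    (wdl1 : ∀ X : C, T.toFunctor.map (S.η.app X) ≫ lam.app X =
      S.η.app (T.toFunctor.obj X))
    -- `λ ∘ T μ^S = μ^S T ∘ S λ ∘ λ S`
    (wdl2 : ∀ X : C, T.toFunctor.map (S.μ.app X) ≫ lam.app X =
      lam.app (S.toFunctor.obj X) ≫ S.toFunctor.map (lam.app X) ≫
        S.μ.app (T.toFunctor.obj X))
    -- `λ ∘ μ^T S = S μ^T ∘ λ T ∘ T λ`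
    (wdl3 : ∀ X : C, T.μ.app (S.toFunctor.obj X) ≫ lam.app X =
      T.toFunctor.map (lam.app X) ≫ lam.app (T.toFunctor.obj X) ≫
        S.toFunctor.map (T.μ.app X)) :
    -- `A ∘ e ST = e ∘ A`, with `A := μ^S μ^T ∘ S λ T : STST ⟶ ST`
    (∀ X : C, eOf S T lam (S.toFunctor.obj (T.toFunctor.obj X)) ≫
        S.toFunctor.map (lam.app (T.toFunctor.obj X)) ≫
        S.toFunctor.map (S.toFunctor.map (T.μ.app X)) ≫ S.μ.app (T.toFunctor.obj X) =
      (S.toFunctor.map (lam.app (T.toFunctor.obj X)) ≫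
        S.toFunctor.map (S.toFunctor.map (T.μ.app X)) ≫ S.μ.app (T.toFunctor.obj X)) ≫
        eOf S T lam X) ∧
    -- `A ∘ ST η^S T = S μ^T`
    (∀ X : C, S.toFunctor.map (T.toFunctor.map (S.η.app (T.toFunctor.obj X))) ≫
        S.toFunctor.map (lam.app (T.toFunctor.obj X)) ≫
        S.toFunctor.map (S.toFunctor.map (T.μ.app X)) ≫ S.μ.app (T.toFunctor.obj X) =
      S.toFunctor.map (T.μ.app X)) := by
  refine ⟨fun X => ?_, fun X => ?_⟩
  · have lnatμ : T.toFunctor.map (S.toFunctor.map (T.μ.app X)) ≫ lam.app (T.toFunctor.obj X) =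
        lam.app (T.toFunctor.obj (T.toFunctor.obj X)) ≫
          S.toFunctor.map (T.toFunctor.map (T.μ.app X)) := by
      simpa using lam.naturality (T.μ.app X)
    have lnat1 : T.toFunctor.map (S.toFunctor.map (lam.app (T.toFunctor.obj X))) ≫
        lam.app (S.toFunctor.obj (T.toFunctor.obj (T.toFunctor.obj X))) =
        lam.app (T.toFunctor.obj (S.toFunctor.obj (T.toFunctor.obj X))) ≫
          S.toFunctor.map (T.toFunctor.map (lam.app (T.toFunctor.obj X))) := by
      simpa using lam.naturality (lam.app (T.toFunctor.obj X))
    have lnat2 : T.toFunctor.map (S.toFunctor.map (S.toFunctor.map (T.μ.app X))) ≫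
        lam.app (S.toFunctor.obj (T.toFunctor.obj X)) =
        lam.app (S.toFunctor.obj (T.toFunctor.obj (T.toFunctor.obj X))) ≫
          S.toFunctor.map (T.toFunctor.map (S.toFunctor.map (T.μ.app X))) := by
      simpa using lam.naturality (S.toFunctor.map (T.μ.app X))
    have etan1 : S.toFunctor.map (lam.app (T.toFunctor.obj X)) ≫
        T.η.app (S.toFunctor.obj (S.toFunctor.obj (T.toFunctor.obj (T.toFunctor.obj X)))) =
        T.η.app (S.toFunctor.obj (T.toFunctor.obj (S.toFunctor.obj (T.toFunctor.obj X)))) ≫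
          T.toFunctor.map (S.toFunctor.map (lam.app (T.toFunctor.obj X))) := by
      simpa using T.η.naturality (S.toFunctor.map (lam.app (T.toFunctor.obj X)))
    have etan2 : S.toFunctor.map (S.toFunctor.map (T.μ.app X)) ≫
        T.η.app (S.toFunctor.obj (S.toFunctor.obj (T.toFunctor.obj X))) =
        T.η.app (S.toFunctor.obj (S.toFunctor.obj (T.toFunctor.obj (T.toFunctor.obj X)))) ≫
          T.toFunctor.map (S.toFunctor.map (S.toFunctor.map (T.μ.app X))) := by
      simpa using T.η.naturality (S.toFunctor.map (S.toFunctor.map (T.μ.app X)))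
    have etan3 : S.μ.app (T.toFunctor.obj X) ≫ T.η.app (S.toFunctor.obj (T.toFunctor.obj X)) =
        T.η.app (S.toFunctor.obj (S.toFunctor.obj (T.toFunctor.obj X))) ≫
          T.toFunctor.map (S.μ.app (T.toFunctor.obj X)) := by
      simpa using T.η.naturality (S.μ.app (T.toFunctor.obj X))
    have munatμ : S.toFunctor.map (S.toFunctor.map (T.μ.app X)) ≫ S.μ.app (T.toFunctor.obj X) =
        S.μ.app (T.toFunctor.obj (T.toFunctor.obj X)) ≫ S.toFunctor.map (T.μ.app X) := by
      simpa using S.μ.naturality (T.μ.app X)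
    have key : T.μ.app (S.toFunctor.obj (T.toFunctor.obj X)) ≫
        lam.app (T.toFunctor.obj X) ≫ S.toFunctor.map (T.μ.app X) =
        T.toFunctor.map (lam.app (T.toFunctor.obj X)) ≫
        T.toFunctor.map (S.toFunctor.map (T.μ.app X)) ≫
        lam.app (T.toFunctor.obj X) ≫ S.toFunctor.map (T.μ.app X) := by
      rw [reassoc_of% wdl3 (T.toFunctor.obj X)]
      slice_lhs 3 4 => rw [← S.toFunctor.map_comp, ← T.assoc, S.toFunctor.map_comp]
      slice_lhs 2 3 => rw [← lnatμ]
      simp only [Category.assoc]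
    calc eOf S T lam (S.toFunctor.obj (T.toFunctor.obj X)) ≫
        S.toFunctor.map (lam.app (T.toFunctor.obj X)) ≫
        S.toFunctor.map (S.toFunctor.map (T.μ.app X)) ≫ S.μ.app (T.toFunctor.obj X)
      = T.η.app _ ≫ lam.app _ ≫
          S.toFunctor.map (T.μ.app (S.toFunctor.obj (T.toFunctor.obj X)) ≫
            lam.app (T.toFunctor.obj X) ≫ S.toFunctor.map (T.μ.app X)) ≫
          S.μ.app (T.toFunctor.obj X) := by simp [eOf, Category.assoc]
      _ = S.toFunctor.map (lam.app (T.toFunctor.obj X)) ≫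
          S.toFunctor.map (S.toFunctor.map (T.μ.app X)) ≫
          T.η.app _ ≫ lam.app (S.toFunctor.obj (T.toFunctor.obj X)) ≫
          S.toFunctor.map (lam.app (T.toFunctor.obj X)) ≫
          S.toFunctor.map (S.toFunctor.map (T.μ.app X)) ≫ S.μ.app _ := by
        rw [key]
        simp only [S.toFunctor.map_comp, Category.assoc]
        slice_lhs 2 3 => rw [← lnat1]
        slice_lhs 3 4 => rw [← lnat2]
        slice_lhs 1 2 => rw [← etan1]
        slice_lhs 2 3 => rw [← etan2]
        simp only [Category.assoc]
      _ = (S.toFunctor.map (lam.app (T.toFunctor.obj X)) ≫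
          S.toFunctor.map (S.toFunctor.map (T.μ.app X)) ≫ S.μ.app (T.toFunctor.obj X)) ≫
          eOf S T lam X := by
        simp only [eOf, Category.assoc]
        slice_rhs 3 4 => rw [etan3]
        slice_rhs 4 5 => rw [wdl2 (T.toFunctor.obj X)]
        slice_rhs 6 7 => rw [← munatμ]
  · have senatμ : T.μ.app X ≫ S.η.app (T.toFunctor.obj X) =
        S.η.app (T.toFunctor.obj (T.toFunctor.obj X)) ≫
          S.toFunctor.map (T.μ.app X) := by
      simpa using S.η.naturality (T.μ.app X)
    rw [← S.toFunctor.map_comp_assoc, wdl1 (T.toFunctor.obj X),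
      ← S.toFunctor.map_comp_assoc, ← senatμ]
    simp
end

section
/- For topological spaces X, consider the map λ_X sending a continuous valuation ξ on the Smyth hyperspace S_V(X) to the set {ν continuous valuation on X | ν(U) ≥ ξ(□U) for every open U ⊆ X}. Then for every ν, the condition 'ν(U) ≥ ξ(□U) for all open U' is equivalent to '∫_X h dν ≥ ∫_{Q ∈ S_V X} min_{x∈Q} h(x) dξ for all lower semicontinuous h : X → [0,∞]'. -/
open Set ENNReal TopologicalSpace MeasureTheory

/-- The specialization preorder: `x ≤ y` iff every open set containing `x`
contains `y`. -/
def SpecLE {X : Type*} [TopologicalSpace X] (x y : X) : Prop :=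
  ∀ U : Set X, IsOpen U → x ∈ U → y ∈ U

/-- A set is saturated iff it is upwards closed in the specialization
preorder (equivalently, an intersection of open sets). -/
def IsSaturated {X : Type*} [TopologicalSpace X] (Q : Set X) : Prop :=
  ∀ ⦃x y : X⦄, SpecLE x y → x ∈ Q → y ∈ Q

/-- The Smyth hyperspace: nonempty compact saturated subsets of `X`. -/
def Smyth (X : Type*) [TopologicalSpace X] :=
  {Q : Set X // IsCompact Q ∧ IsSaturated Q ∧ Q.Nonempty}

/-- The upper Vietoris topology on the Smyth hyperspace, generated by the
basic open sets `□U = {Q | Q ⊆ U}`, `U` open. -/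
instance Smyth.topology (X : Type*) [TopologicalSpace X] :
    TopologicalSpace (Smyth X) :=
  TopologicalSpace.generateFrom
    {s | ∃ U : Set X, IsOpen U ∧ s = {Q : Smyth X | Q.1 ⊆ U}}

/-- A continuous valuation: a strict, modular, Scott-continuous map from the
open sets to `[0, ∞]`. -/
def IsContinuousValuation {Y : Type*} [TopologicalSpace Y]
    (ν : Opens Y → ℝ≥0∞) : Prop :=
  ν ⊥ = 0 ∧
  (∀ U V : Opens Y, ν U + ν V = ν (U ⊔ V) + ν (U ⊓ V)) ∧
  (∀ D : Set (Opens Y), D.Nonempty → DirectedOn (· ≤ ·) D →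
    ν (sSup D) = ⨆ U ∈ D, ν U)

/-- The Choquet integral `∫ h dν = ∫₀^∞ ν (h⁻¹ (t, ∞]) dt` of a lower
semicontinuous map against a valuation. -/
noncomputable def choquet {Y : Type*} [TopologicalSpace Y] (ν : Opens Y → ℝ≥0∞)
    (h : Y → ℝ≥0∞) (hh : LowerSemicontinuous h) : ℝ≥0∞ :=
  ∫⁻ t in Set.Ioi (0 : ℝ),
    ν ⟨h ⁻¹' Set.Ioi (ENNReal.ofReal t),
       lowerSemicontinuous_iff_isOpen_preimage.mp hh _⟩

/-- The basic open set `□U` of the upper Vietoris topology, as an open set of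
the Smyth hyperspace. -/
def boxOpen {X : Type*} [TopologicalSpace X] (U : Opens X) : Opens (Smyth X) :=
  ⟨{Q : Smyth X | Q.1 ⊆ U.1},
   TopologicalSpace.GenerateOpen.basic _ ⟨U.1, U.2, rfl⟩⟩


/-!
For compact nonempty `Q` and lower semicontinuous `h`, the minimum of `h` on `Q` is attained, so
`min_Q h > t` iff `Q ⊆ h⁻¹ (t, ∞]`: the superlevel sets of `Q ↦ min_Q h` are the boxes
`□ h⁻¹ (t, ∞]`, and domination on boxes gives the integral inequality level by level.
Conversely, the min-transform of the indicator `1_U` is `1_{□U}`, and the Choquet integrals of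
these indicators are `ν U` and (at least) `ξ (□U)`.
-/

theorem LowerSemicontinuous.lt_biInf_iff_subset_preimage_Ioi {X β : Type*}
    [TopologicalSpace X] [CompleteLinearOrder β] {h : X → β} (hh : LowerSemicontinuous h)
    {Q : Set X} (hQ : IsCompact Q) (hne : Q.Nonempty) {a : β} :
    a < ⨅ x ∈ Q, h x ↔ Q ⊆ h ⁻¹' Ioi a := by
  obtain ⟨x₀, hx₀, hmin⟩ := (hh.lowerSemicontinuousOn Q).exists_isMinOn hne hQ
  have hinf : ⨅ x ∈ Q, h x = h x₀ := le_antisymm (iInf₂_le x₀ hx₀) (le_iInf₂ hmin)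
  rw [hinf]
  exact ⟨fun ha _ hx => ha.trans_le (hmin hx), fun hsub => hsub hx₀⟩

theorem Smyth.preimage_biInf_Ioi {X β : Type*} [TopologicalSpace X] [CompleteLinearOrder β]
    {h : X → β} (hh : LowerSemicontinuous h) (a : β) :
    (fun Q : Smyth X => ⨅ x ∈ Q.1, h x) ⁻¹' Ioi a = {Q | Q.1 ⊆ h ⁻¹' Ioi a} := by
  ext Q
  exact hh.lt_biInf_iff_subset_preimage_Ioi Q.2.1 Q.2.2.2

theorem Smyth.biInf_indicator_one {X : Type*} [TopologicalSpace X] (U : Opens X) :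
    (fun Q : Smyth X => ⨅ x ∈ Q.1, (U : Set X).indicator (1 : X → ℝ≥0∞) x)
      = (boxOpen U : Set (Smyth X)).indicator 1 := by
  funext Q
  by_cases hQ : Q.1 ⊆ U
  · obtain ⟨x₀, hx₀⟩ := Q.2.2.2
    rw [indicator_of_mem (show Q ∈ (boxOpen U : Set (Smyth X)) from hQ)]
    refine le_antisymm ((iInf₂_le x₀ hx₀).trans_eq (indicator_of_mem (hQ hx₀) _)) ?_
    exact le_iInf₂ fun x hx => (indicator_of_mem (hQ hx) (1 : X → ℝ≥0∞)).ge
  · obtain ⟨x, hxQ, hxU⟩ := not_subset.1 hQ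
    rw [indicator_of_notMem (show Q ∉ (boxOpen U : Set (Smyth X)) from hQ)]
    exact le_antisymm ((iInf₂_le x hxQ).trans_eq (indicator_of_notMem hxU _)) zero_le

theorem Set.indicator_one_preimage_Ioi {Y : Type*} (W : Set Y) (a : ℝ≥0∞) :
    W.indicator (1 : Y → ℝ≥0∞) ⁻¹' Ioi a = if a < 1 then W else ∅ := by
  ext y
  by_cases hy : y ∈ W <;> split_ifs with ha <;> simp [hy, ha]

-- The term `∞ * ν ⊥` comes from the levels `t ≥ 1`, where the superlevel set of `1_W` is empty.
theorem choquet_eq_of_eq_indicator_one {Y : Type*} [TopologicalSpace Y] (ν : Opens Y → ℝ≥0∞)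
    {W : Opens Y} {h : Y → ℝ≥0∞} (hW : h = (W : Set Y).indicator 1)
    (hh : LowerSemicontinuous h) : choquet ν h hh = ν W + ∞ * ν ⊥ := by
  subst hW
  have hlevel : ∀ t : ℝ, (⟨_, lowerSemicontinuous_iff_isOpen_preimage.mp hh (ENNReal.ofReal t)⟩
      : Opens Y) = if t < 1 then W else ⊥ := by
    intro t
    split_ifs with ht <;> ext y <;> simp [indicator_one_preimage_Ioi, ENNReal.ofReal_lt_one, ht]
  unfold choquet
  simp_rw [hlevel]
  rw [← Ioo_union_Ici_eq_Ioi zero_lt_one,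
    lintegral_union measurableSet_Ici ((Iio_disjoint_Ici le_rfl).mono_left Ioo_subset_Iio_self),
    setLIntegral_congr_fun measurableSet_Ioo fun t ht => congrArg ν (if_pos ht.2),
    setLIntegral_congr_fun measurableSet_Ici fun t ht => congrArg ν (if_neg (not_lt.2 ht)),
    setLIntegral_const, setLIntegral_const, Real.volume_Ioo, Real.volume_Ici]
  simp [mul_comm]

theorem smyth_valuation_domination_iff_general {X : Type*} [TopologicalSpace X]
    (ν : Opens X → ℝ≥0∞) (ξ : Opens (Smyth X) → ℝ≥0∞)
    (hν : IsContinuousValuation ν)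
    (hmin : ∀ (h : X → ℝ≥0∞), LowerSemicontinuous h →
      LowerSemicontinuous fun Q : Smyth X => ⨅ x ∈ Q.1, h x) :
    (∀ U : Opens X, ξ (boxOpen U) ≤ ν U) ↔
      ∀ (h : X → ℝ≥0∞) (hh : LowerSemicontinuous h),
        choquet ξ (fun Q : Smyth X => ⨅ x ∈ Q.1, h x) (hmin h hh) ≤ choquet ν h hh := by
  constructor
  · intro hdom h hh
    refine lintegral_mono fun t => ?_
    have hbox : (⟨_, lowerSemicontinuous_iff_isOpen_preimage.mp (hmin h hh) (ENNReal.ofReal t)⟩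
        : Opens (Smyth X)) = boxOpen ⟨_, hh.isOpen_preimage (ENNReal.ofReal t)⟩ :=
      Opens.ext (Smyth.preimage_biInf_Ioi hh _)
    exact hbox ▸ hdom _
  · intro hint U
    have hU : LowerSemicontinuous ((U : Set X).indicator 1) :=
      U.isOpen.lowerSemicontinuous_indicator (y := (1 : ℝ≥0∞)) zero_le_one
    calc ξ (boxOpen U) ≤ ξ (boxOpen U) + ∞ * ξ ⊥ := le_self_add
      _ = choquet ξ _ (hmin _ hU) :=
        (choquet_eq_of_eq_indicator_one ξ (Smyth.biInf_indicator_one U) (hmin _ hU)).symm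
      _ ≤ choquet ν _ hU := hint _ hU
      _ = ν U := by rw [choquet_eq_of_eq_indicator_one ν rfl, hν.1, mul_zero, add_zero]

/-- For continuous valuations `ν` on `X` and `ξ` on the Smyth hyperspace of `X`,
the condition `ν U ≥ ξ (□U)` for all open `U` is equivalent to
`∫ h dν ≥ ∫ (Q ↦ min_{x ∈ Q} h x) dξ` for all lower semicontinuous
`h : X → [0, ∞]`. -/
theorem smyth_valuation_domination_iff {X : Type*} [TopologicalSpace X]
    (ν : Opens X → ℝ≥0∞) (ξ : Opens (Smyth X) → ℝ≥0∞)
    (hν : IsContinuousValuation ν) (hξ : IsContinuousValuation ξ)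
    (hmin : ∀ (h : X → ℝ≥0∞), LowerSemicontinuous h →
      LowerSemicontinuous fun Q : Smyth X => ⨅ x ∈ Q.1, h x) :
    (∀ U : Opens X, ξ (boxOpen U) ≤ ν U) ↔
      ∀ (h : X → ℝ≥0∞) (hh : LowerSemicontinuous h),
        choquet ξ (fun Q : Smyth X => ⨅ x ∈ Q.1, h x) (hmin h hh) ≤ choquet ν h hh :=
  smyth_valuation_domination_iff_general ν ξ hν hmin
end

section
/- For every topological space X and lower semicontinuous h : X → [0,∞], the map h_* : S_V(X) → [0,∞] defined by h_*(Q) = min_{x ∈ Q} h(x) is well defined (the minimum is attained) and lower semicontinuous, with h_*⁻¹((t,∞]) = □(h⁻¹((t,∞])) for every t ≥ 0. -/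
open Set ENNReal TopologicalSpace MeasureTheory

/-- A lower semicontinuous `ℝ≥0∞`-valued function attains its infimum on a
nonempty compact set. -/
lemma lsc_attains_min {X : Type*} [TopologicalSpace X] (h : X → ℝ≥0∞)
    (hh : LowerSemicontinuous h) {Q : Set X} (hQ : IsCompact Q) (hne : Q.Nonempty) :
    ∃ x ∈ Q, h x = ⨅ y ∈ Q, h y := by
  set m := ⨅ y ∈ Q, h y with hm
  by_contra hc
  push_neg at hc
  have hgt : ∀ x ∈ Q, m < h x := by
    intro x hx
    exact lt_of_le_of_ne (biInf_le h hx) fun e => hc x hx e.symm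
  have hmtop : m ≠ ⊤ := by
    intro htop
    obtain ⟨x, hx⟩ := hne
    exact absurd (hgt x hx) (by simp [htop])
  -- cover Q by the open sets `h⁻¹ (Ioi t)` for `t ∈ Ioi m`
  have hcov : Q ⊆ ⋃ t : Ioi m, h ⁻¹' Ioi (t : ℝ≥0∞) := by
    intro x hx
    obtain ⟨t, ht1, ht2⟩ := exists_between (hgt x hx)
    exact mem_iUnion.2 ⟨⟨t, ht1⟩, ht2⟩
  obtain ⟨s, hs⟩ := hQ.elim_finite_subcover (fun t : Ioi m => h ⁻¹' Ioi (t : ℝ≥0∞))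
    (fun t => hh.isOpen_preimage _) hcov
  have hsne : s.Nonempty := by
    obtain ⟨x, hx⟩ := hne
    obtain ⟨t, hts, _⟩ := mem_iUnion₂.1 (hs hx)
    exact ⟨t, hts⟩
  set t0 := s.inf' hsne (fun t : Ioi m => (t : ℝ≥0∞)) with ht0
  have ht0m : m < t0 := by
    rw [ht0, Finset.lt_inf'_iff]
    exact fun t _ => t.2
  have hle : t0 ≤ m := by
    rw [hm]
    refine le_iInf₂ fun x hx => ?_
    obtain ⟨t, hts, hxt⟩ := mem_iUnion₂.1 (hs hx)
    exact le_trans (Finset.inf'_le _ hts) (le_of_lt hxt)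
  exact absurd (lt_of_lt_of_le ht0m hle) (lt_irrefl m)

/-- For a lower semicontinuous `h : X → [0, ∞]`, the map
`h_* : Q ↦ min_{x ∈ Q} h x` on the Smyth hyperspace is well defined (the
infimum is attained), its preimage of `(t, ∞]` is `□ (h⁻¹ (t, ∞])`, and it is
lower semicontinuous. -/
theorem smyth_min_lowerSemicontinuous {X : Type*} [TopologicalSpace X]
    (h : X → ℝ≥0∞) (hh : LowerSemicontinuous h) :
    (∀ Q : Smyth X, ∃ x ∈ Q.1, h x = ⨅ y ∈ Q.1, h y) ∧
    (∀ t : ℝ≥0∞, (fun Q : Smyth X => ⨅ x ∈ Q.1, h x) ⁻¹' Set.Ioi t =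
      {Q : Smyth X | Q.1 ⊆ h ⁻¹' Set.Ioi t}) ∧
    LowerSemicontinuous fun Q : Smyth X => ⨅ x ∈ Q.1, h x := by
  have hmin : ∀ Q : Smyth X, ∃ x ∈ Q.1, h x = ⨅ y ∈ Q.1, h y := fun Q =>
    lsc_attains_min h hh Q.2.1 Q.2.2.2
  have hpre : ∀ t : ℝ≥0∞, (fun Q : Smyth X => ⨅ x ∈ Q.1, h x) ⁻¹' Set.Ioi t =
      {Q : Smyth X | Q.1 ⊆ h ⁻¹' Set.Ioi t} := by
    intro t
    ext Q
    simp only [Set.mem_preimage, Set.mem_Ioi, Set.mem_setOf_eq]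
    constructor
    · intro ht x hx
      exact lt_of_lt_of_le ht (biInf_le h hx)
    · intro hsub
      obtain ⟨x, hx, hxe⟩ := hmin Q
      rw [← hxe]
      exact hsub hx
  refine ⟨hmin, hpre, ?_⟩
  rw [lowerSemicontinuous_iff_isOpen_preimage]
  intro t
  rw [hpre t]
  exact TopologicalSpace.GenerateOpen.basic _
    ⟨h ⁻¹' Set.Ioi t, hh.isOpen_preimage t, rfl⟩
end

section
/- On a stably compact space X, the pair of maps ϖ₁ : L ↦ ↑L and ϖ₂ : L ↦ ↓L from the space of lenses (with the Vietoris topology) to the Smyth hyperspace and the Hoare hyperspace respectively are continuous, where for a lens L the downward closure ↓L equals the topological closure cl(L). -/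
open Set ENNReal TopologicalSpace MeasureTheory

/-- The Hoare hyperspace: nonempty closed subsets of `X`, with the lower
Vietoris topology generated by `◇U = {C | C ∩ U ≠ ∅}`, `U` open. -/
def Hoare (X : Type*) [TopologicalSpace X] :=
  {C : Set X // IsClosed C ∧ C.Nonempty}

instance Hoare.topology (X : Type*) [TopologicalSpace X] :
    TopologicalSpace (Hoare X) :=
  TopologicalSpace.generateFrom
    {s | ∃ U : Set X, IsOpen U ∧ s = {C : Hoare X | (C.1 ∩ U).Nonempty}}

/-- A lens on `X`: a nonempty set of the form `Q ∩ C` with `Q` compact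
saturated and `C` closed. -/
def IsLens {X : Type*} [TopologicalSpace X] (L : Set X) : Prop :=
  L.Nonempty ∧ ∃ Q C : Set X,
    IsCompact Q ∧ IsSaturated Q ∧ IsClosed C ∧ L = Q ∩ C

/-- The space of lenses on `X`, with the Vietoris topology generated by
`□U` and `◇U`, `U` open. -/
def Lens (X : Type*) [TopologicalSpace X] := {L : Set X // IsLens L}

instance Lens.topology (X : Type*) [TopologicalSpace X] :
    TopologicalSpace (Lens X) :=
  TopologicalSpace.generateFrom
    ({s | ∃ U : Set X, IsOpen U ∧ s = {L : Lens X | L.1 ⊆ U}} ∪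
     {s | ∃ U : Set X, IsOpen U ∧ s = {L : Lens X | (L.1 ∩ U).Nonempty}})

/-- Upward closure in the specialization preorder. -/
def upCl {X : Type*} [TopologicalSpace X] (A : Set X) : Set X :=
  {y | ∃ x ∈ A, SpecLE x y}

/-- Downward closure in the specialization preorder. -/
def dnCl {X : Type*} [TopologicalSpace X] (A : Set X) : Set X :=
  {y | ∃ x ∈ A, SpecLE y x}

/-! Both projections are continuous for a formal reason: for open `U`, `↑L ⊆ U ↔ L ⊆ U`, and
`cl L` meets `U` iff `L` does. The substance is `cl (Q ∩ C) ⊆ ↓(Q ∩ C)`. If `y ∈ cl (Q ∩ C)` but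
`↑y` misses `Q ∩ C`, note that `↑y` is the filtered intersection of the compact saturated
neighbourhoods `N` of `y` (local compactness) and that the sets `N ∩ Q` are compact saturated
(coherence). Sober spaces are well filtered, so some `N ∩ Q` is already disjoint from `C`, and the
interior of that `N` is a neighbourhood of `y` missing `Q ∩ C`. -/

open Topology

section Specialization

variable {X : Type*} [TopologicalSpace X]

theorem specLE_iff_specializes {x y : X} : SpecLE x y ↔ y ⤳ x :=
  specializes_iff_forall_open.symm

theorem IsSaturated.mem_of_specializes {Q : Set X} (hQ : IsSaturated Q) {x y : X}
    (h : y ⤳ x) (hx : x ∈ Q) : y ∈ Q :=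
  hQ (specLE_iff_specializes.2 h) hx

theorem IsSaturated.inter {Q R : Set X} (hQ : IsSaturated Q) (hR : IsSaturated R) :
    IsSaturated (Q ∩ R) :=
  fun _ _ hxy hx => ⟨hQ hxy hx.1, hR hxy hx.2⟩

theorem subset_upCl (A : Set X) : A ⊆ upCl A :=
  fun x hx => ⟨x, hx, fun _ _ h => h⟩

theorem isSaturated_upCl (A : Set X) : IsSaturated (upCl A) := by
  rintro x y hxy ⟨z, hz, hzx⟩
  exact ⟨z, hz, fun U hU hzU => hxy U hU (hzx U hU hzU)⟩

theorem upCl_subset_of_isOpen {A U : Set X} (hU : IsOpen U) (hAU : A ⊆ U) : upCl A ⊆ U := by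
  rintro y ⟨x, hx, hxy⟩
  exact hxy U hU (hAU hx)

theorem upCl_subset_iff_of_isOpen {A U : Set X} (hU : IsOpen U) : upCl A ⊆ U ↔ A ⊆ U :=
  ⟨(subset_upCl A).trans, upCl_subset_of_isOpen hU⟩

theorem IsCompact.upCl {K : Set X} (hK : IsCompact K) : IsCompact (upCl K) :=
  isCompact_iff_finite_subcover.2 fun U hU hcover =>
    let ⟨t, ht⟩ := hK.elim_finite_subcover U hU ((subset_upCl K).trans hcover)
    ⟨t, upCl_subset_of_isOpen (isOpen_biUnion fun i _ => hU i) ht⟩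

theorem dnCl_subset_closure (A : Set X) : dnCl A ⊆ closure A := by
  rintro y ⟨x, hx, hyx⟩
  exact (specLE_iff_specializes.1 hyx).mem_closed isClosed_closure (subset_closure hx)

end Specialization

section WellFiltered

variable {X : Type*} [TopologicalSpace X] {ι : Type*} {K : ι → Set X}

theorem exists_minimal_isClosed_inter_nonempty (hKc : ∀ i, IsCompact (K i)) {C : Set X}
    (hC : IsClosed C) (hCK : ∀ i, (K i ∩ C).Nonempty) :
    ∃ m ⊆ C, Minimal (fun D => IsClosed D ∧ ∀ i, (K i ∩ D).Nonempty) m := by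
  refine zorn_superset_nonempty _ (fun c hcS hchain ⟨D₀, hD₀⟩ => ?_) C ⟨hC, hCK⟩
  have : Nonempty c := ⟨⟨D₀, hD₀⟩⟩
  refine ⟨⋂₀ c, ⟨isClosed_sInter fun D hD => (hcS hD).1, fun i => ?_⟩,
    fun D hD => sInter_subset_of_mem hD⟩
  rw [nonempty_iff_ne_empty, sInter_eq_iInter]
  intro hempty
  obtain ⟨⟨D, hD⟩, hKD⟩ := (hKc i).elim_directed_family_closed (fun D : c => D.1)
    (fun D => (hcS D.2).1) hempty (IsChain.directed (f := fun D : Set X => D) hchain.symm)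
  exact ((hcS hD).2 i).ne_empty hKD

theorem isIrreducible_of_minimal_isClosed_inter_nonempty [Nonempty ι]
    (hK : Directed (· ⊇ ·) K) {m : Set X}
    (hm : Minimal (fun D => IsClosed D ∧ ∀ i, (K i ∩ D).Nonempty) m) : IsIrreducible m := by
  obtain ⟨i₀⟩ := ‹Nonempty ι›
  refine ⟨(hm.1.2 i₀).mono inter_subset_right,
    isPreirreducible_iff_isClosed_union_isClosed.2 fun z₁ z₂ hz₁ hz₂ hcover => ?_⟩
  -- If neither `m ∩ z₁` nor `m ∩ z₂` met every `K i`, a common lower bound `K k` would miss `m`.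
  by_contra! hnot
  have hmiss : ∀ z, IsClosed z → ¬ m ⊆ z → ∃ i, K i ∩ (m ∩ z) = ∅ := by
    intro z hz hmz
    by_contra! hmeet
    exact hmz ((hm.2 ⟨hm.1.1.inter hz, hmeet⟩ inter_subset_left).trans inter_subset_right)
  obtain ⟨i, hi⟩ := hmiss z₁ hz₁ hnot.1
  obtain ⟨j, hj⟩ := hmiss z₂ hz₂ hnot.2
  obtain ⟨k, hki, hkj⟩ := hK i j
  obtain ⟨x, hxK, hxm⟩ := hm.1.2 k
  rcases hcover hxm with hx | hx
  · exact (eq_empty_iff_forall_notMem.1 hi) x ⟨hki hxK, hxm, hx⟩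
  · exact (eq_empty_iff_forall_notMem.1 hj) x ⟨hkj hxK, hxm, hx⟩

/-- Sober spaces are well filtered. -/
theorem exists_subset_of_iInter_subset_of_directed [QuasiSober X] [Nonempty ι]
    (hKc : ∀ i, IsCompact (K i)) (hKs : ∀ i, IsSaturated (K i)) (hK : Directed (· ⊇ ·) K)
    {U : Set X} (hU : IsOpen U) (hKU : ⋂ i, K i ⊆ U) : ∃ i, K i ⊆ U := by
  by_contra! hnot
  obtain ⟨m, hmU, hm⟩ := exists_minimal_isClosed_inter_nonempty hKc hU.isClosed_compl
    fun i => inter_compl_nonempty_iff.2 (hnot i)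
  have hirr := isIrreducible_of_minimal_isClosed_inter_nonempty hK hm
  have hgen := hirr.isGenericPoint_genericPoint hm.1.1
  -- The generic point of `m` specializes to a point of every `K i ∩ m`, so it lies in every `K i`.
  have hmem : ∀ i, hirr.genericPoint ∈ K i := fun i => by
    obtain ⟨x, hxK, hxm⟩ := hm.1.2 i
    exact (hKs i).mem_of_specializes (hgen.specializes hxm) hxK
  exact hmU hgen.mem (hKU (mem_iInter.2 hmem))

end WellFiltered

section CompactSaturatedNhds

variable {X : Type*} [TopologicalSpace X]

def compactSaturatedNhds (y : X) : Set (Set X) :=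
  {N | N ∈ 𝓝 y ∧ IsCompact N ∧ IsSaturated N}

theorem compactSaturatedNhds_nonempty [WeaklyLocallyCompactSpace X] (y : X) :
    (compactSaturatedNhds y).Nonempty :=
  let ⟨K, hKc, hK⟩ := exists_compact_mem_nhds y
  ⟨upCl K, Filter.mem_of_superset hK (subset_upCl K), hKc.upCl, isSaturated_upCl K⟩

theorem directedOn_compactSaturatedNhds
    (hcoherent : ∀ Q₁ Q₂ : Set X, IsCompact Q₁ → IsSaturated Q₁ →
      IsCompact Q₂ → IsSaturated Q₂ → IsCompact (Q₁ ∩ Q₂)) (y : X) :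
    DirectedOn (· ⊇ ·) (compactSaturatedNhds y) :=
  fun _ ⟨hN₁, hN₁c, hN₁s⟩ _ ⟨hN₂, hN₂c, hN₂s⟩ =>
    ⟨_, ⟨Filter.inter_mem hN₁ hN₂, hcoherent _ _ hN₁c hN₁s hN₂c hN₂s, hN₁s.inter hN₂s⟩,
      inter_subset_left, inter_subset_right⟩

theorem specLE_of_forall_mem_compactSaturatedNhds [LocallyCompactSpace X] {y z : X}
    (h : ∀ N ∈ compactSaturatedNhds y, z ∈ N) : SpecLE y z := by
  intro V hV hyV
  obtain ⟨K, hK, hKV, hKc⟩ := local_compact_nhds (hV.mem_nhds hyV)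
  exact upCl_subset_of_isOpen hV hKV
    (h _ ⟨Filter.mem_of_superset hK (subset_upCl K), hKc.upCl, isSaturated_upCl K⟩)

end CompactSaturatedNhds

theorem closure_inter_subset_dnCl {X : Type*} [TopologicalSpace X] [QuasiSober X]
    [LocallyCompactSpace X]
    (hcoherent : ∀ Q₁ Q₂ : Set X, IsCompact Q₁ → IsSaturated Q₁ →
      IsCompact Q₂ → IsSaturated Q₂ → IsCompact (Q₁ ∩ Q₂))
    {Q C : Set X} (hQc : IsCompact Q) (hQs : IsSaturated Q) (hC : IsClosed C) :
    closure (Q ∩ C) ⊆ dnCl (Q ∩ C) := by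
  intro y hy
  by_contra hyL
  have : Nonempty (compactSaturatedNhds y) := (compactSaturatedNhds_nonempty y).to_subtype
  have hmiss : ⋂ N : compactSaturatedNhds y, N.1 ∩ Q ⊆ Cᶜ := by
    intro z hz hzC
    simp only [mem_iInter] at hz
    have hyz : SpecLE y z :=
      specLE_of_forall_mem_compactSaturatedNhds fun N hN => (hz ⟨N, hN⟩).1
    exact hyL ⟨z, ⟨(hz (Classical.arbitrary _)).2, hzC⟩, hyz⟩
  obtain ⟨⟨N, hN, _⟩, hNQ⟩ := exists_subset_of_iInter_subset_of_directed
    (K := fun N : compactSaturatedNhds y => N.1 ∩ Q)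
    (fun N => hcoherent _ _ N.2.2.1 N.2.2.2 hQc hQs) (fun N => N.2.2.2.inter hQs)
    ((directedOn_iff_directed.1 (directedOn_compactSaturatedNhds hcoherent y)).mono_comp
      (rb := (· ⊇ ·)) (g := (· ∩ Q)) _ fun _ _ h => inter_subset_inter_left Q h)
    hC.isOpen_compl hmiss
  obtain ⟨x, hxN, hxQ, hxC⟩ :=
    mem_closure_iff.1 hy _ isOpen_interior (mem_interior_iff_mem_nhds.2 hN)
  exact hNQ ⟨interior_subset hxN, hxQ⟩ hxC

namespace Lens

variable {X : Type*} [TopologicalSpace X]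

theorem isCompact (L : Lens X) : IsCompact L.1 := by
  obtain ⟨-, Q, C, hQc, -, hC, hL⟩ := L.2
  exact hL ▸ hQc.inter_right hC

def toSmyth (L : Lens X) : Smyth X :=
  ⟨upCl L.1, L.isCompact.upCl, isSaturated_upCl _, L.2.1.mono (subset_upCl _)⟩

def toHoare (L : Lens X) : Hoare X :=
  ⟨closure L.1, isClosed_closure, L.2.1.closure⟩

theorem continuous_toSmyth : Continuous (toSmyth (X := X)) := by
  refine continuous_generateFrom_iff.2 ?_
  rintro _ ⟨U, hU, rfl⟩
  have hbox : toSmyth ⁻¹' {Q : Smyth X | Q.1 ⊆ U} = {L : Lens X | L.1 ⊆ U} :=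
    Set.ext fun _ => upCl_subset_iff_of_isOpen hU
  rw [hbox]
  exact isOpen_generateFrom_of_mem (Or.inl ⟨U, hU, rfl⟩)

theorem continuous_toHoare : Continuous (toHoare (X := X)) := by
  refine continuous_generateFrom_iff.2 ?_
  rintro _ ⟨U, hU, rfl⟩
  have hdiamond : toHoare ⁻¹' {C : Hoare X | (C.1 ∩ U).Nonempty} =
      {L : Lens X | (L.1 ∩ U).Nonempty} :=
    Set.ext fun _ => closure_inter_open_nonempty_iff hU
  rw [hdiamond]
  exact isOpen_generateFrom_of_mem (Or.inr ⟨U, hU, rfl⟩)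

end Lens

theorem lens_projections_continuous_general {X : Type*} [TopologicalSpace X]
    [QuasiSober X] [LocallyCompactSpace X]
    (hcoherent : ∀ Q₁ Q₂ : Set X, IsCompact Q₁ → IsSaturated Q₁ →
      IsCompact Q₂ → IsSaturated Q₂ → IsCompact (Q₁ ∩ Q₂)) :
    (∀ L : Lens X, closure L.1 = dnCl L.1) ∧
    (∃ f : Lens X → Smyth X, (∀ L : Lens X, (f L).1 = upCl L.1) ∧ Continuous f) ∧
    (∃ g : Lens X → Hoare X, (∀ L : Lens X, (g L).1 = closure L.1) ∧ Continuous g) := by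
  refine ⟨fun L => ?_, ⟨Lens.toSmyth, fun _ => rfl, Lens.continuous_toSmyth⟩,
    ⟨Lens.toHoare, fun _ => rfl, Lens.continuous_toHoare⟩⟩
  obtain ⟨-, Q, C, hQc, hQs, hC, hL⟩ := L.2
  rw [hL]
  exact (closure_inter_subset_dnCl hcoherent hQc hQs hC).antisymm (dnCl_subset_closure _)

/-- On a stably compact space (sober, locally compact, compact, coherent),
the closure of every lens equals its downward closure, and the maps
`ϖ₁ : L ↦ ↑L` into the Smyth hyperspace and `ϖ₂ : L ↦ cl L` into the Hoare
hyperspace are well defined and continuous. -/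
theorem lens_projections_continuous {X : Type*} [TopologicalSpace X]
    [T0Space X] [QuasiSober X] [LocallyCompactSpace X] [CompactSpace X]
    (hcoherent : ∀ Q₁ Q₂ : Set X, IsCompact Q₁ → IsSaturated Q₁ →
      IsCompact Q₂ → IsSaturated Q₂ → IsCompact (Q₁ ∩ Q₂)) :
    (∀ L : Lens X, closure L.1 = dnCl L.1) ∧
    (∃ f : Lens X → Smyth X, (∀ L : Lens X, (f L).1 = upCl L.1) ∧ Continuous f) ∧
    (∃ g : Lens X → Hoare X, (∀ L : Lens X, (g L).1 = closure L.1) ∧ Continuous g) :=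
  lens_projections_continuous_general hcoherent
end
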